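/- arXiv:1911.02713 — 2 statements merged into one kernel-verified Lean document; each statement's English description precedes it below -/
import Mathlib

section
/- Let L > 0 and a ∈ C¹([0,L]). Then there exist constants c₁ > 0 and c₂ > 0, depending only on L and a, such that for every continuously differentiable w : [0,L] → ℝ, the function ω(x) = w(x) − ∫ₓᴸ a(y − x) w(y) dy satisfies c₁ ‖w‖_{H¹} ≤ ‖ω‖_{H¹} ≤ c₂ ‖w‖_{H¹}. -/
open Set MeasureTheory intervalIntegral

lemma cs_aux {L : ℝ} (hL : 0 < L) {f : ℝ → ℝ} (hf : ContinuousOn f (Icc 0 L)) :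
    (∫ x in (0:ℝ)..L, f x) ^ 2 ≤ L * ∫ x in (0:ℝ)..L, f x ^ 2 := by
  have hf' : ContinuousOn f (uIcc 0 L) := by rwa [uIcc_of_le hL.le]
  have hfi : IntervalIntegrable f volume 0 L := hf'.intervalIntegrable
  have hfi2 : IntervalIntegrable (fun x => f x ^ 2) volume 0 L := (hf'.pow 2).intervalIntegrable
  set I1 : ℝ := ∫ x in (0:ℝ)..L, f x with hI1
  set I2 : ℝ := ∫ x in (0:ℝ)..L, f x ^ 2 with hI2
  set c : ℝ := I1 / L with hc
  have key : (0:ℝ) ≤ ∫ x in (0:ℝ)..L, (f x - c) ^ 2 :=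
    intervalIntegral.integral_nonneg hL.le (fun _ _ => sq_nonneg _)
  have expand : (∫ x in (0:ℝ)..L, (f x - c) ^ 2)
      = I2 - 2 * c * I1 + c ^ 2 * L := by
    have : ∀ x, (f x - c) ^ 2 = f x ^ 2 - (2 * c) * f x + c ^ 2 := by intro x; ring
    simp_rw [this]
    rw [intervalIntegral.integral_add ((hfi2.sub (hfi.const_mul _))) intervalIntegrable_const,
      intervalIntegral.integral_sub hfi2 (hfi.const_mul _),
      intervalIntegral.integral_const_mul, intervalIntegral.integral_const]
    simp only [smul_eq_mul]; ring
  rw [expand, hc] at key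
  have h2 : 0 ≤ I2 - I1 ^ 2 / L := by
    have e : 2 * (I1 / L) * I1 - (I1 / L) ^ 2 * L = I1 ^ 2 / L := by
      field_simp; ring
    linarith
  calc I1 ^ 2 = L * (I1 ^ 2 / L) := by field_simp
    _ ≤ L * I2 := mul_le_mul_of_nonneg_left (by linarith) hL.le

noncomputable def prj (L t : ℝ) : ℝ := max 0 (min t L)

noncomputable def extb (L : ℝ) (a : ℝ → ℝ) (t : ℝ) : ℝ :=
  a (prj L t) + derivWithin a (Icc 0 L) 0 * min t 0 + derivWithin a (Icc 0 L) L * max (t - L) 0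

noncomputable def extB (L : ℝ) (a : ℝ → ℝ) (t : ℝ) : ℝ := derivWithin a (Icc 0 L) (prj L t)

lemma prj_mem {L : ℝ} (hL : 0 < L) (t : ℝ) : prj L t ∈ Icc 0 L :=
  ⟨le_max_left _ _, max_le hL.le (min_le_right _ _)⟩

lemma prj_eq {L : ℝ} {t : ℝ} (ht : t ∈ Icc 0 L) : prj L t = t := by
  simp [prj, min_eq_left ht.2, max_eq_right ht.1]

lemma continuous_prj (L : ℝ) : Continuous (prj L) :=
  continuous_const.max (continuous_id.min continuous_const)

lemma extb_eq {L : ℝ} (a : ℝ → ℝ) {t : ℝ} (ht : t ∈ Icc 0 L) : extb L a t = a t := by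
  have h1 : min t 0 = 0 := min_eq_right ht.1
  have h2 : max (t - L) 0 = 0 := max_eq_right (by linarith [ht.2])
  simp [extb, prj_eq ht, h1, h2]

lemma extB_eq {L : ℝ} (a : ℝ → ℝ) {t : ℝ} (ht : t ∈ Icc 0 L) :
    extB L a t = derivWithin a (Icc 0 L) t := by simp [extB, prj_eq ht]

lemma continuous_extB {L : ℝ} (hL : 0 < L) {a : ℝ → ℝ} (ha : ContDiffOn ℝ 1 a (Icc 0 L)) :
    Continuous (extB L a) := by
  have hA : ContinuousOn (derivWithin a (Icc 0 L)) (Icc 0 L) :=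
    ha.continuousOn_derivWithin (uniqueDiffOn_Icc hL) le_rfl
  exact hA.comp_continuous (continuous_prj L) (prj_mem hL)

lemma hasDerivAt_extb {L : ℝ} (hL : 0 < L) {a : ℝ → ℝ} (ha : ContDiffOn ℝ 1 a (Icc 0 L)) :
    ∀ t, HasDerivAt (extb L a) (extB L a t) t := by
  set A := derivWithin a (Icc 0 L) with hAdef
  have hA : ∀ x ∈ Icc 0 L, HasDerivWithinAt a (A x) (Icc 0 L) x := fun x hx =>
    (ha.differentiableOn one_ne_zero x hx).hasDerivWithinAt
  -- linear pieces
  have hleft : ∀ s ∈ Iic (0:ℝ), extb L a s = a 0 + A 0 * s := by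
    intro s hs
    have h0 : min s L = s := min_eq_left (le_trans hs hL.le)
    have h1 : max (0:ℝ) s = 0 := max_eq_left hs
    have h2 : min s 0 = s := min_eq_left hs
    have h3 : max (s - L) 0 = 0 := max_eq_right (by simp only [mem_Iic] at hs; linarith)
    simp [extb, prj, h0, h1, h2, h3, hAdef]
  have hright : ∀ s ∈ Ici L, extb L a s = a L + A L * (s - L) := by
    intro s hs
    simp only [mem_Ici] at hs
    have h0 : min s L = L := min_eq_right hs
    have h1 : max (0:ℝ) L = L := max_eq_right hL.le
    have h2 : min s 0 = 0 := min_eq_right (le_trans hL.le hs)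
    have h3 : max (s - L) 0 = s - L := max_eq_left (by linarith)
    simp [extb, prj, h0, h1, h2, h3, hAdef]
  have hmid : ∀ s ∈ Icc 0 L, extb L a s = a s := fun s hs => extb_eq a hs
  intro t
  rcases lt_trichotomy t 0 with ht | ht | ht
  · -- t < 0
    have : HasDerivAt (fun s => a 0 + A 0 * s) (A 0) t := by
      simpa using (hasDerivAt_id t).const_mul (A 0) |>.const_add (a 0)
    have heq : extb L a =ᶠ[nhds t] (fun s => a 0 + A 0 * s) := by
      filter_upwards [Iio_mem_nhds ht] with s hs using hleft s (mem_Iic.mpr hs.le)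
    have hB : extB L a t = A 0 := by
      have h0 : min t L = t := min_eq_left (by linarith)
      simp [extB, prj, h0, max_eq_left ht.le, hAdef]
    rw [hB]
    exact this.congr_of_eventuallyEq heq
  · -- t = 0
    subst ht
    have hB : extB L a 0 = A 0 := by rw [extB_eq a (left_mem_Icc.mpr hL.le)]
    rw [hB]
    have h1 : HasDerivWithinAt (extb L a) (A 0) (Iic 0) 0 := by
      have : HasDerivAt (fun s => a 0 + A 0 * s) (A 0) 0 := by
        simpa using (hasDerivAt_id (0:ℝ)).const_mul (A 0) |>.const_add (a 0)
      exact (this.hasDerivWithinAt).congr hleft (hleft 0 (mem_Iic.mpr le_rfl))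
    have h2 : HasDerivWithinAt (extb L a) (A 0) (Ici 0) 0 := by
      have hmem : Icc (0:ℝ) L ∈ nhdsWithin 0 (Ici 0) := by
        rw [← Ici_inter_Iic]
        exact Filter.inter_mem self_mem_nhdsWithin
          (nhdsWithin_le_nhds (Iic_mem_nhds hL))
      have := (hA 0 (left_mem_Icc.mpr hL.le)).mono_of_mem_nhdsWithin hmem
      refine this.congr_of_eventuallyEq ?_ (hmid 0 (left_mem_Icc.mpr hL.le))
      filter_upwards [hmem] with s hs using hmid s hs
    have := h1.union h2
    rwa [Iic_union_Ici, hasDerivWithinAt_univ] at this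
  · rcases lt_trichotomy t L with htL | htL | htL
    · -- 0 < t < L
      have hmem : Icc (0:ℝ) L ∈ nhds t := Icc_mem_nhds ht htL
      have : HasDerivAt a (A t) t := (hA t ⟨ht.le, htL.le⟩).hasDerivAt hmem
      have hB : extB L a t = A t := by rw [extB_eq a ⟨ht.le, htL.le⟩]
      rw [hB]
      refine this.congr_of_eventuallyEq ?_
      filter_upwards [hmem] with s hs using hmid s hs
    · -- t = L
      rw [htL] at ht ⊢
      have hB : extB L a L = A L := by rw [extB_eq a (right_mem_Icc.mpr hL.le)]
      rw [hB]
      have h2 : HasDerivWithinAt (extb L a) (A L) (Ici L) L := by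
        have : HasDerivAt (fun s => a L + A L * (s - L)) (A L) L := by
          simpa using ((hasDerivAt_id L).sub_const L).const_mul (A L) |>.const_add (a L)
        exact (this.hasDerivWithinAt).congr hright (hright L (mem_Ici.mpr le_rfl))
      have h1 : HasDerivWithinAt (extb L a) (A L) (Iic L) L := by
        have hmem : Icc (0:ℝ) L ∈ nhdsWithin L (Iic L) := by
          rw [← Ici_inter_Iic]
          exact Filter.inter_mem (nhdsWithin_le_nhds (Ici_mem_nhds hL))
            self_mem_nhdsWithin
        have := (hA L (right_mem_Icc.mpr hL.le)).mono_of_mem_nhdsWithin hmem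
        refine this.congr_of_eventuallyEq ?_ (hmid L (right_mem_Icc.mpr hL.le))
        filter_upwards [hmem] with s hs using hmid s hs
      have := h1.union h2
      rwa [Iic_union_Ici, hasDerivWithinAt_univ] at this
    · -- t > L
      have : HasDerivAt (fun s => a L + A L * (s - L)) (A L) t := by
        simpa using ((hasDerivAt_id t).sub_const L).const_mul (A L) |>.const_add (a L)
      have heq : extb L a =ᶠ[nhds t] (fun s => a L + A L * (s - L)) := by
        filter_upwards [Ioi_mem_nhds htL] with s hs using hright s (mem_Ici.mpr (le_of_lt hs))
      have hB : extB L a t = A L := by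
        have h0 : min t L = L := min_eq_right htL.le
        simp [extB, prj, h0, max_eq_right hL.le, hAdef]
      rw [hB]
      exact this.congr_of_eventuallyEq heq

lemma continuous_extb {L : ℝ} (hL : 0 < L) {a : ℝ → ℝ} (ha : ContDiffOn ℝ 1 a (Icc 0 L)) :
    Continuous (extb L a) :=
  continuous_iff_continuousAt.mpr fun t => (hasDerivAt_extb hL ha t).continuousAt

lemma hasDerivAt_moving (b v : ℝ → ℝ) (hbc : Continuous b) (hv : Continuous v) (x₀ : ℝ) :
    HasDerivAt (fun x => ∫ y in x₀..x, b (y - x) * v y) (b 0 * v x₀) x₀ := by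
  rw [hasDerivAt_iff_isLittleO, Asymptotics.isLittleO_iff]
  intro c hc
  have hcont : ContinuousAt (fun p : ℝ × ℝ => b (p.2 - p.1) * v p.2) (x₀, x₀) :=
    (((hbc.comp (continuous_snd.sub continuous_fst)).mul
      (hv.comp continuous_snd))).continuousAt
  obtain ⟨δ, hδ, hδ'⟩ := Metric.continuousAt_iff.mp hcont c hc
  filter_upwards [Metric.ball_mem_nhds x₀ hδ] with x hx
  have hint1 : IntervalIntegrable (fun y => b (y - x) * v y) volume x₀ x :=
    (((hbc.comp (continuous_id.sub continuous_const)).mul hv)).intervalIntegrable _ _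
  have key : (∫ y in x₀..x, b (y - x) * v y) - (x - x₀) • (b 0 * v x₀)
      = ∫ y in x₀..x, (b (y - x) * v y - b 0 * v x₀) := by
    rw [intervalIntegral.integral_sub hint1 intervalIntegrable_const,
      intervalIntegral.integral_const]
  have hsimp : ∫ y in x₀..x₀, b (y - x₀) * v y = 0 := intervalIntegral.integral_same
  rw [Real.norm_eq_abs] at *
  have hb2 : ∀ y ∈ uIoc x₀ x, ‖b (y - x) * v y - b 0 * v x₀‖ ≤ c := by
    intro y hy
    have hy' : |y - x₀| ≤ |x - x₀| := by
      rcases le_total x₀ x with h | h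
      · rw [uIoc_of_le h] at hy; rw [abs_of_nonneg (by linarith [hy.1]), abs_of_nonneg (by linarith)]
        linarith [hy.2]
      · rw [uIoc_of_ge h] at hy; rw [abs_of_nonpos (by linarith [hy.2]), abs_of_nonpos (by linarith)]
        linarith [hy.1]
    have hd : dist (x, y) (x₀, x₀) < δ := by
      rw [Prod.dist_eq]
      simp only [Real.dist_eq]
      exact max_lt (by rwa [Metric.mem_ball, Real.dist_eq] at hx)
        (lt_of_le_of_lt hy' (by rwa [Metric.mem_ball, Real.dist_eq] at hx))
    have := hδ' hd
    rw [Real.dist_eq] at this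
    simpa using this.le
  calc ‖(∫ y in x₀..x, b (y - x) * v y) - (∫ y in x₀..x₀, b (y - x₀) * v y)
        - (x - x₀) • (b 0 * v x₀)‖
      = ‖∫ y in x₀..x, (b (y - x) * v y - b 0 * v x₀)‖ := by rw [hsimp, sub_zero, key]
    _ ≤ c * |x - x₀| := intervalIntegral.norm_integral_le_of_norm_le_const hb2

lemma hasDerivAt_conv {L : ℝ} {b B v : ℝ → ℝ}
    (hb : ∀ t, HasDerivAt b (B t) t) (hB : Continuous B) (hv : Continuous v) (x₀ : ℝ) :
    HasDerivAt (fun x => ∫ y in x..L, b (y - x) * v y)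
      (-(b 0 * v x₀) - ∫ y in x₀..L, B (y - x₀) * v y) x₀ := by
  have hbc : Continuous b := continuous_iff_continuousAt.mpr fun t => (hb t).continuousAt
  have hcint : ∀ (x u w : ℝ), IntervalIntegrable (fun y => b (y - x) * v y) volume u w :=
    fun x u w => (((hbc.comp (continuous_id.sub continuous_const)).mul hv)).intervalIntegrable _ _
  -- bound for B on a compact set
  obtain ⟨C, hC⟩ := (isCompact_Icc (a := min x₀ L - x₀ - 1) (b := max x₀ L - x₀ + 1)).exists_bound_of_continuousOn hB.continuousOn
  -- parametric part
  have hG : HasDerivAt (fun x => ∫ y in x₀..L, b (y - x) * v y)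
      (∫ y in x₀..L, -(B (y - x₀) * v y)) x₀ := by
    have hdiff : ∀ (y x : ℝ), HasDerivAt (fun x => b (y - x) * v y) (-(B (y - x) * v y)) x := by
      intro y x
      have h1 : HasDerivAt (fun x => b (y - x)) (B (y - x) * (-1)) x :=
        (hb (y - x)).comp x (by simpa using (hasDerivAt_id' x).const_sub y)
      have := h1.mul_const (v y)
      exact this.congr_deriv (by ring)
    refine (intervalIntegral.hasDerivAt_integral_of_dominated_loc_of_deriv_le
      (F := fun x y => b (y - x) * v y) (F' := fun x y => -(B (y - x) * v y))
      (bound := fun y => |C| * |v y|) (Metric.ball_mem_nhds x₀ one_pos) ?_ (hcint _ _ _) ?_ ?_ ?_ ?_).2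
    · exact Filter.Eventually.of_forall fun x =>
        (((hbc.comp (continuous_id.sub continuous_const)).mul hv)).aestronglyMeasurable.restrict
    · exact (((hB.comp (continuous_id.sub continuous_const)).mul hv).neg).aestronglyMeasurable.restrict
    · refine Filter.Eventually.of_forall fun y => fun hy x hx => ?_
      have hyK : y - x ∈ Icc (min x₀ L - x₀ - 1) (max x₀ L - x₀ + 1) := by
        have h1 : y ∈ Icc (min x₀ L) (max x₀ L) := by
          rcases le_total x₀ L with h | h
          · rw [uIoc_of_le h] at hy
            constructor
            · simp [min_eq_left h]; linarith [hy.1]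
            · simp [max_eq_right h]; linarith [hy.2]
          · rw [uIoc_of_ge h] at hy
            constructor
            · simp [min_eq_right h]; linarith [hy.1]
            · simp [max_eq_left h]; linarith [hy.2]
        rw [Metric.mem_ball, Real.dist_eq, abs_lt] at hx
        constructor <;> [linarith [h1.1]; linarith [h1.2]]
      have h3 := (hC _ hyK).trans (le_abs_self C)
      rw [Real.norm_eq_abs] at h3
      rw [norm_neg, norm_mul, Real.norm_eq_abs, Real.norm_eq_abs]
      exact mul_le_mul h3 le_rfl (abs_nonneg _) (abs_nonneg _)
    · exact (continuous_const.mul hv.abs).intervalIntegrable _ _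
    · exact Filter.Eventually.of_forall fun y => fun _ x _ => hdiff y x
  have hH : HasDerivAt (fun x => ∫ y in x₀..x, b (y - x) * v y) (b 0 * v x₀) x₀ :=
    hasDerivAt_moving b v hbc hv x₀
  have := hG.sub hH
  have heq : (fun x => ∫ y in x..L, b (y - x) * v y)
      = fun x => (∫ y in x₀..L, b (y - x) * v y) - ∫ y in x₀..x, b (y - x) * v y := by
    funext x
    have := intervalIntegral.integral_add_adjacent_intervals (hcint x x₀ x) (hcint x x L)
    have h2 := intervalIntegral.integral_add_adjacent_intervals (hcint x x₀ x) (hcint x x L)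
    linarith [h2]
  rw [heq]
  refine this.congr_deriv ?_
  rw [intervalIntegral.integral_neg]; ring

lemma sup_bound {L : ℝ} (hL : 0 < L) {u p : ℝ → ℝ}
    (hu : ContinuousOn u (Icc 0 L)) (hp : ContinuousOn p (Icc 0 L))
    (hup : ∀ x ∈ Ioo 0 L, HasDerivAt u (p x) x) {x : ℝ} (hx : x ∈ Icc 0 L) :
    |u x| ≤ (1 / Real.sqrt L + Real.sqrt L) *
      Real.sqrt ((∫ y in (0:ℝ)..L, u y ^ 2) + ∫ y in (0:ℝ)..L, p y ^ 2) := by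
  have huI : ContinuousOn u (uIcc 0 L) := by rwa [uIcc_of_le hL.le]
  have hpI : ContinuousOn p (uIcc 0 L) := by rwa [uIcc_of_le hL.le]
  set T : ℝ := (∫ y in (0:ℝ)..L, u y ^ 2) + ∫ y in (0:ℝ)..L, p y ^ 2 with hT
  have hu2 : (0:ℝ) ≤ ∫ y in (0:ℝ)..L, u y ^ 2 :=
    intervalIntegral.integral_nonneg hL.le fun _ _ => sq_nonneg _
  have hp2 : (0:ℝ) ≤ ∫ y in (0:ℝ)..L, p y ^ 2 :=
    intervalIntegral.integral_nonneg hL.le fun _ _ => sq_nonneg _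
  have hT0 : 0 ≤ T := by positivity
  have hsL : 0 < Real.sqrt L := Real.sqrt_pos.mpr hL
  -- minimizer
  obtain ⟨x₀, hx₀, hmin⟩ := isCompact_Icc.exists_isMinOn (nonempty_Icc.mpr hL.le) hu.abs
  -- L * |u x₀| ^ 2 ≤ ∫ u ^ 2
  have h1 : L * |u x₀| ^ 2 ≤ ∫ y in (0:ℝ)..L, u y ^ 2 := by
    have : ∫ y in (0:ℝ)..L, |u x₀| ^ 2 ≤ ∫ y in (0:ℝ)..L, u y ^ 2 := by
      apply intervalIntegral.integral_mono_on hL.le intervalIntegrable_const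
        ((huI.pow 2).intervalIntegrable)
      intro y hy
      have := hmin hy
      simp only [mem_setOf_eq] at this
      rw [Pi.pow_apply, ← sq_abs (u y)]
      exact pow_le_pow_left₀ (abs_nonneg _) this 2
    simpa [smul_eq_mul, mul_comm] using this
  have hux₀ : |u x₀| ≤ Real.sqrt T / Real.sqrt L := by
    have hsq : |u x₀| ^ 2 ≤ T / L := by
      rw [le_div_iff₀ hL]; nlinarith
    calc |u x₀| = Real.sqrt (|u x₀| ^ 2) := (Real.sqrt_sq (abs_nonneg _)).symm
      _ ≤ Real.sqrt (T / L) := Real.sqrt_le_sqrt hsq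
      _ = Real.sqrt T / Real.sqrt L := Real.sqrt_div hT0 L
  have hpabs : IntervalIntegrable (fun y => |p y|) volume 0 L := hpI.abs.intervalIntegrable
  have hftc : |u x - u x₀| ≤ ∫ y in (0:ℝ)..L, |p y| := by
    have hmono : ∀ {s t : ℝ}, s ∈ Icc 0 L → t ∈ Icc 0 L → s ≤ t →
        |u t - u s| ≤ ∫ y in (0:ℝ)..L, |p y| := by
      intro s t hs ht hst
      have hint : IntervalIntegrable p volume s t :=
        (hp.mono (Icc_subset_Icc hs.1 ht.2)).intervalIntegrable_of_Icc hst
      have heq := intervalIntegral.integral_eq_sub_of_hasDerivAt_of_le hst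
        (hu.mono (Icc_subset_Icc hs.1 ht.2))
        (fun y hy => hup y ⟨lt_of_le_of_lt hs.1 hy.1, lt_of_lt_of_le hy.2 ht.2⟩) hint
      rw [← heq]
      calc |∫ y in s..t, p y| ≤ ∫ y in s..t, |p y| :=
            intervalIntegral.abs_integral_le_integral_abs hst
        _ ≤ ∫ y in (0:ℝ)..L, |p y| :=
            intervalIntegral.integral_mono_interval hs.1 hst ht.2
              (Filter.Eventually.of_forall fun _ => abs_nonneg _) hpabs
    rcases le_total x₀ x with h | h
    · exact hmono hx₀ hx h
    · rw [abs_sub_comm]; exact hmono hx hx₀ h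
  have h2 : ∫ y in (0:ℝ)..L, |p y| ≤ Real.sqrt L * Real.sqrt T := by
    have hcs := cs_aux hL hp.abs
    simp only [sq_abs] at hcs
    have hnn : (0:ℝ) ≤ ∫ y in (0:ℝ)..L, |p y| :=
      intervalIntegral.integral_nonneg hL.le fun _ _ => abs_nonneg _
    calc ∫ y in (0:ℝ)..L, |p y| = Real.sqrt ((∫ y in (0:ℝ)..L, |p y|) ^ 2) :=
          (Real.sqrt_sq hnn).symm
      _ ≤ Real.sqrt (L * T) := Real.sqrt_le_sqrt (by nlinarith)
      _ = Real.sqrt L * Real.sqrt T := Real.sqrt_mul hL.le T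
  have habs : |u x| ≤ |u x₀| + |u x - u x₀| := by
    calc |u x| = |u x₀ + (u x - u x₀)| := by ring_nf
      _ ≤ |u x₀| + |u x - u x₀| := abs_add_le _ _
  have hfin : |u x| ≤ Real.sqrt T / Real.sqrt L + Real.sqrt L * Real.sqrt T := by
    linarith
  calc |u x| ≤ Real.sqrt T / Real.sqrt L + Real.sqrt L * Real.sqrt T := hfin
    _ = (1 / Real.sqrt L + Real.sqrt L) * Real.sqrt T := by ring

lemma gronwall_aux {L M S : ℝ} (hL : 0 < L) (hM : 0 < M) (hS : 0 ≤ S)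
    {v ω : ℝ → ℝ} (hv : Continuous v)
    (hptw : ∀ x ∈ Icc 0 L, |v x| ≤ |ω x| + M * ∫ y in x..L, |v y|)
    (hωS : ∀ x ∈ Icc 0 L, |ω x| ≤ S) :
    ∀ x ∈ Icc 0 L, |v x| ≤ Real.exp (M * L) * S := by
  set φ : ℝ → ℝ := fun x => ∫ y in x..L, |v y| with hφdef
  have hφ' : ∀ x, HasDerivAt φ (-|v x|) x := by
    intro x
    have h1 : HasDerivAt (fun x => ∫ y in L..x, |v y|) (|v x|) x :=
      intervalIntegral.integral_hasDerivAt_right (hv.abs.intervalIntegrable _ _)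
        (hv.abs.stronglyMeasurableAtFilter _ _) hv.abs.continuousAt
    have heq : φ = fun s => -∫ y in L..s, |v y| := by
      funext s
      rw [hφdef]
      exact intervalIntegral.integral_symm L s
    rw [heq]
    exact h1.neg
  set ψ : ℝ → ℝ := fun x => Real.exp (M * x) * (M * φ x + S) with hψdef
  have hψ' : ∀ x, HasDerivAt ψ
      (M * Real.exp (M * x) * (M * φ x + S) + Real.exp (M * x) * (M * -|v x|)) x := by
    intro x
    have he : HasDerivAt (fun x => Real.exp (M * x)) (Real.exp (M * x) * M) x := by
      simpa using ((hasDerivAt_id x).const_mul M).exp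
    have hg : HasDerivAt (fun x => M * φ x + S) (M * -|v x|) x :=
      ((hφ' x).const_mul M).add_const S
    have := he.mul hg
    exact this.congr_deriv (by ring)
  have hφnn : ∀ x ∈ Icc 0 L, 0 ≤ φ x := fun x hx =>
    intervalIntegral.integral_nonneg hx.2 fun _ _ => abs_nonneg _
  have hmono : MonotoneOn ψ (Icc 0 L) := by
    apply monotoneOn_of_deriv_nonneg (convex_Icc 0 L)
      (fun x _ => (hψ' x).differentiableAt.continuousAt.continuousWithinAt)
    · intro x hx
      exact (hψ' x).differentiableAt.differentiableWithinAt
    · intro x hx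
      rw [interior_Icc] at hx
      rw [(hψ' x).deriv]
      have h1 := hptw x ⟨hx.1.le, hx.2.le⟩
      have h2 := hωS x ⟨hx.1.le, hx.2.le⟩
      have h3 : |v x| ≤ M * φ x + S := by rw [hφdef]; dsimp only; linarith
      have h4 : 0 < Real.exp (M * x) := Real.exp_pos _
      nlinarith [mul_le_mul_of_nonneg_left h3 (le_of_lt (mul_pos hM h4))]
  intro x hx
  have hψx : ψ x ≤ ψ L := hmono hx (right_mem_Icc.mpr hL.le) hx.2
  have hψL : ψ L = Real.exp (M * L) * S := by
    rw [hψdef]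
    simp [hφdef, intervalIntegral.integral_same]
  have h1 := hptw x hx
  have h2 := hωS x hx
  have h3 : |v x| ≤ M * φ x + S := by rw [hφdef]; dsimp only; linarith
  have hexp1 : 1 ≤ Real.exp (M * x) :=
    Real.one_le_exp (by nlinarith [hx.1])
  have h5 : M * φ x + S ≤ ψ x := by
    have hnn : 0 ≤ M * φ x + S := by nlinarith [hφnn x hx]
    have := mul_le_mul_of_nonneg_right hexp1 hnn
    rw [hψdef]
    dsimp only
    linarith
  rw [hψL] at hψx
  linarith

/-- The `H¹(0,L)` norm of a (piecewise) continuously differentiable `u : [0,L] → ℝ`. -/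
noncomputable def H1norm (L : ℝ) (u : ℝ → ℝ) : ℝ :=
  Real.sqrt ((∫ x in (0:ℝ)..L, u x ^ 2) + ∫ x in (0:ℝ)..L, (deriv u x) ^ 2)

set_option maxHeartbeats 2000000 in
/-- the transformation
`ω(x) = w(x) − ∫ₓᴸ a(y−x) w(y) dy` (with `a ∈ C¹([0,L])`) establishes
equivalence of `H¹` norms, with constants depending only on `L` and `a`. -/
theorem stmt11 (L : ℝ) (hL : 0 < L) (a : ℝ → ℝ)
    (ha : ContDiffOn ℝ 1 a (Icc 0 L)) :
    ∃ c₁ > (0:ℝ), ∃ c₂ > (0:ℝ),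
      ∀ w : ℝ → ℝ, ContDiffOn ℝ 1 w (Icc 0 L) →
        c₁ * H1norm L w ≤ H1norm L (fun x => w x - ∫ y in x..L, a (y - x) * w y) ∧
        H1norm L (fun x => w x - ∫ y in x..L, a (y - x) * w y) ≤ c₂ * H1norm L w := by
  classical
  set b : ℝ → ℝ := extb L a with hbdef
  set B : ℝ → ℝ := extB L a with hBdef
  have hb : ∀ t, HasDerivAt b (B t) t := hasDerivAt_extb hL ha
  have hBc : Continuous B := continuous_extB hL ha
  have hbc : Continuous b := continuous_extb hL ha
  obtain ⟨M1, hM1⟩ := (isCompact_Icc (a := (0:ℝ)) (b := L)).exists_bound_of_continuousOn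
    hbc.continuousOn
  obtain ⟨M2, hM2⟩ := (isCompact_Icc (a := (0:ℝ)) (b := L)).exists_bound_of_continuousOn
    hBc.continuousOn
  set M : ℝ := max M1 M2 + 1 with hMdef
  have hM1nn : 0 ≤ M1 := le_trans (norm_nonneg _) (hM1 0 (left_mem_Icc.mpr hL.le))
  have hM : 0 < M := by
    have : 0 ≤ max M1 M2 := le_trans hM1nn (le_max_left _ _)
    linarith
  have hMb : ∀ t ∈ Icc 0 L, |b t| ≤ M := by
    intro t ht
    have := hM1 t ht
    rw [Real.norm_eq_abs] at this
    have h2 : M1 ≤ M := by rw [hMdef]; linarith [le_max_left M1 M2]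
    linarith
  have hMB : ∀ t ∈ Icc 0 L, |B t| ≤ M := by
    intro t ht
    have := hM2 t ht
    rw [Real.norm_eq_abs] at this
    have h2 : M2 ≤ M := by rw [hMdef]; linarith [le_max_right M1 M2]
    linarith
  have hsL : 0 < Real.sqrt L := Real.sqrt_pos.mpr hL
  set CL : ℝ := 1 / Real.sqrt L + Real.sqrt L with hCLdef
  have hCL : 0 < CL := by positivity
  set E : ℝ := Real.exp (M * L) with hEdef
  have hE : 0 < E := Real.exp_pos _
  set K1 : ℝ := 3 + (1 + 3 * M ^ 2 + 3 * M ^ 2 * L ^ 2) * (L * E ^ 2 * CL ^ 2) with hK1def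
  set K2 : ℝ := 5 + 5 * M ^ 2 + 5 * M ^ 2 * L ^ 2 with hK2def
  have hK1 : 0 < K1 := by positivity
  have hK2 : 0 < K2 := by positivity
  have hsK1 : 0 < Real.sqrt K1 := Real.sqrt_pos.mpr hK1
  refine ⟨1 / Real.sqrt K1, by positivity, Real.sqrt K2, Real.sqrt_pos.mpr hK2, ?_⟩
  intro w hw
  -- extended w
  set v : ℝ → ℝ := fun t => w (prj L t) with hvdef
  have hvc : Continuous v := hw.continuousOn.comp_continuous (continuous_prj L) (prj_mem hL)
  have hvw : ∀ t ∈ Icc 0 L, v t = w t := fun t ht => congrArg w (prj_eq ht)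
  set F : ℝ → ℝ := fun x => ∫ y in x..L, b (y - x) * v y with hFdef
  set G : ℝ → ℝ := fun x => ∫ y in x..L, B (y - x) * v y with hGdef
  have hF' : ∀ x, HasDerivAt F (-(b 0 * v x) - G x) x := fun x => hasDerivAt_conv hb hBc hvc x
  have hFc : Continuous F := continuous_iff_continuousAt.mpr fun x => (hF' x).continuousAt
  have hGc : Continuous G := by
    have h1 : Continuous fun x => ∫ y in L..x, B (y - x) * v y :=
      intervalIntegral.continuous_parametric_intervalIntegral_of_continuous
        (f := fun x y => B (y - x) * v y)
        ((hBc.comp (continuous_snd.sub continuous_fst)).mul (hvc.comp continuous_snd))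
        continuous_id
    have h2 : G = fun x => -∫ y in L..x, B (y - x) * v y := by
      funext x
      rw [hGdef]
      exact intervalIntegral.integral_symm L x
    rw [h2]
    exact h1.neg
  set ωt : ℝ → ℝ := fun x => v x - F x with hωtdef
  have hωtc : Continuous ωt := hvc.sub hFc
  set dw : ℝ → ℝ := derivWithin w (Icc 0 L) with hdwdef
  have hdwc : ContinuousOn dw (Icc 0 L) := hw.continuousOn_derivWithin (uniqueDiffOn_Icc hL) le_rfl
  have hwd : ∀ x ∈ Ioo 0 L, HasDerivAt w (dw x) x := fun x hx =>
    (hw.differentiableOn one_ne_zero x ⟨hx.1.le, hx.2.le⟩).hasDerivWithinAt.hasDerivAt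
      (Icc_mem_nhds hx.1 hx.2)
  set p : ℝ → ℝ := fun x => dw x + b 0 * w x + G x with hpdef
  have hpc : ContinuousOn p (Icc 0 L) :=
    (hdwc.add (continuousOn_const.mul hw.continuousOn)).add hGc.continuousOn
  have hωt' : ∀ x ∈ Ioo 0 L, HasDerivAt ωt (p x) x := by
    intro x hx
    have hvd : HasDerivAt v (dw x) x := by
      refine (hwd x hx).congr_of_eventuallyEq ?_
      filter_upwards [Icc_mem_nhds hx.1 hx.2] with s hs using hvw s hs
    have h2 := hvd.sub (hF' x)
    have hvx := hvw x ⟨hx.1.le, hx.2.le⟩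
    have h3 : p x = dw x - (-(b 0 * v x) - G x) := by
      rw [hpdef]; dsimp only; rw [← hvx]; ring
    rw [hωtdef]
    rw [h3]
    exact h2
  set ω : ℝ → ℝ := fun x => w x - ∫ y in x..L, a (y - x) * w y with hωdef
  have hωeq : ∀ x ∈ Icc 0 L, ω x = ωt x := by
    intro x hx
    rw [hωdef, hωtdef]
    dsimp only
    rw [hvw x hx]
    congr 1
    rw [hFdef]
    refine intervalIntegral.integral_congr fun y hy => ?_
    rw [uIcc_of_le hx.2] at hy
    have hyx : y - x ∈ Icc 0 L := ⟨by linarith [hy.1], by linarith [hy.2, hx.1]⟩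
    have hyI : y ∈ Icc 0 L := ⟨le_trans hx.1 hy.1, hy.2⟩
    rw [hbdef, extb_eq a hyx, hvw y hyI]
  -- integrals
  have huIcc : uIcc (0:ℝ) L = Icc 0 L := uIcc_of_le hL.le
  set Iw2 : ℝ := ∫ y in (0:ℝ)..L, w y ^ 2 with hIw2def
  set Idw2 : ℝ := ∫ y in (0:ℝ)..L, dw y ^ 2 with hIdw2def
  set Iom2 : ℝ := ∫ y in (0:ℝ)..L, ωt y ^ 2 with hIom2def
  set Ip2 : ℝ := ∫ y in (0:ℝ)..L, p y ^ 2 with hIp2def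
  have hIw2nn : 0 ≤ Iw2 := intervalIntegral.integral_nonneg hL.le fun _ _ => sq_nonneg _
  have hIdw2nn : 0 ≤ Idw2 := intervalIntegral.integral_nonneg hL.le fun _ _ => sq_nonneg _
  have hIom2nn : 0 ≤ Iom2 := intervalIntegral.integral_nonneg hL.le fun _ _ => sq_nonneg _
  have hIp2nn : 0 ≤ Ip2 := intervalIntegral.integral_nonneg hL.le fun _ _ => sq_nonneg _
  have haeL : ∀ᵐ x : ℝ ∂(volume : Measure ℝ), x ≠ L := by
    have hset : {x : ℝ | ¬ x ≠ L} = {L} := by ext x; simp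
    rw [MeasureTheory.ae_iff, hset]
    exact measure_singleton L
  have hH1w : H1norm L w = Real.sqrt (Iw2 + Idw2) := by
    rw [H1norm]
    congr 1
    congr 1
    apply intervalIntegral.integral_congr_ae
    filter_upwards [haeL] with x hxL hxI
    rw [uIoc_of_le hL.le] at hxI
    have hxoo : x ∈ Ioo 0 L := ⟨hxI.1, lt_of_le_of_ne hxI.2 hxL⟩
    rw [(hwd x hxoo).deriv]
  have hH1om : H1norm L ω = Real.sqrt (Iom2 + Ip2) := by
    rw [H1norm]
    have e1 : ∫ x in (0:ℝ)..L, ω x ^ 2 = Iom2 := by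
      apply intervalIntegral.integral_congr
      intro x hx
      rw [huIcc] at hx
      show ω x ^ 2 = ωt x ^ 2
      rw [hωeq x hx]
    have e2 : ∫ x in (0:ℝ)..L, deriv ω x ^ 2 = Ip2 := by
      apply intervalIntegral.integral_congr_ae
      filter_upwards [haeL] with x hxL hxI
      rw [uIoc_of_le hL.le] at hxI
      have hxoo : x ∈ Ioo 0 L := ⟨hxI.1, lt_of_le_of_ne hxI.2 hxL⟩
      have hd1 : deriv ω x = deriv ωt x := by
        apply Filter.EventuallyEq.deriv_eq
        filter_upwards [Ioo_mem_nhds hxoo.1 hxoo.2] with s hs using hωeq s ⟨hs.1.le, hs.2.le⟩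
      rw [hd1, (hωt' x hxoo).deriv]
    rw [e1, e2]
  -- the quantity J
  set J : ℝ := ∫ y in (0:ℝ)..L, |v y| with hJdef
  have hJnn : 0 ≤ J := intervalIntegral.integral_nonneg hL.le fun _ _ => abs_nonneg _
  have hJ2 : J ^ 2 ≤ L * Iw2 := by
    have hJv : J = ∫ y in (0:ℝ)..L, |w y| := by
      apply intervalIntegral.integral_congr
      intro y hy
      rw [huIcc] at hy
      show |v y| = |w y|
      rw [hvw y hy]
    have hcs := cs_aux hL hw.continuousOn.abs
    simp only [sq_abs] at hcs
    rw [hJv]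
    exact hcs
  -- bounds on convolution-type integrals
  have hbound : ∀ g : ℝ → ℝ, Continuous g → (∀ t ∈ Icc 0 L, |g t| ≤ M) →
      ∀ x ∈ Icc 0 L, |∫ y in x..L, g (y - x) * v y| ≤ M * ∫ y in x..L, |v y| := by
    intro g hgc hgM x hx
    have h1 : |∫ y in x..L, g (y - x) * v y| ≤ ∫ y in x..L, |g (y - x) * v y| :=
      intervalIntegral.abs_integral_le_integral_abs hx.2
    have h2 : (∫ y in x..L, |g (y - x) * v y|) ≤ ∫ y in x..L, M * |v y| := by
      apply intervalIntegral.integral_mono_on hx.2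
        ((by fun_prop : Continuous fun y => |g (y - x) * v y|).intervalIntegrable _ _)
        ((by fun_prop : Continuous fun y => M * |v y|).intervalIntegrable _ _)
      intro y hy
      rw [abs_mul]
      exact mul_le_mul_of_nonneg_right
        (hgM _ ⟨by linarith [hy.1], by linarith [hy.2, hx.1]⟩) (abs_nonneg _)
    rw [intervalIntegral.integral_const_mul] at h2
    linarith
  have hJsub : ∀ x ∈ Icc 0 L, (∫ y in x..L, |v y|) ≤ J := by
    intro x hx
    exact intervalIntegral.integral_mono_interval hx.1 hx.2 le_rfl
      (Filter.Eventually.of_forall fun _ => abs_nonneg _) (hvc.abs.intervalIntegrable _ _)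
  have hFb : ∀ x ∈ Icc 0 L, |F x| ≤ M * J := by
    intro x hx
    refine le_trans (hbound b hbc hMb x hx) ?_
    exact mul_le_mul_of_nonneg_left (hJsub x hx) hM.le
  have hGb : ∀ x ∈ Icc 0 L, |G x| ≤ M * J := by
    intro x hx
    refine le_trans (hbound B hBc hMB x hx) ?_
    exact mul_le_mul_of_nonneg_left (hJsub x hx) hM.le
  -- generic integral comparison
  have key_int : ∀ (q f g : ℝ → ℝ) (c1 c2 c3 : ℝ), ContinuousOn q (Icc 0 L) →
      ContinuousOn f (Icc 0 L) → ContinuousOn g (Icc 0 L) →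
      (∀ y ∈ Icc 0 L, q y ^ 2 ≤ c1 * f y ^ 2 + c2 * g y ^ 2 + c3) →
      (∫ y in (0:ℝ)..L, q y ^ 2) ≤
        c1 * (∫ y in (0:ℝ)..L, f y ^ 2) + c2 * (∫ y in (0:ℝ)..L, g y ^ 2) + c3 * L := by
    intro q f g c1 c2 c3 hq hf hg hptw
    have hi1 : IntervalIntegrable (fun y => c1 * f y ^ 2) volume 0 L :=
      ((continuousOn_const.mul (hf.pow 2)).intervalIntegrable_of_Icc hL.le)
    have hi2 : IntervalIntegrable (fun y => c2 * g y ^ 2) volume 0 L :=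
      ((continuousOn_const.mul (hg.pow 2)).intervalIntegrable_of_Icc hL.le)
    have h1 := intervalIntegral.integral_mono_on hL.le
      ((hq.pow 2).intervalIntegrable_of_Icc hL.le)
      ((hi1.add hi2).add intervalIntegrable_const) hptw
    have h2 : (∫ y in (0:ℝ)..L, (c1 * f y ^ 2 + c2 * g y ^ 2 + c3))
        = c1 * (∫ y in (0:ℝ)..L, f y ^ 2) + c2 * (∫ y in (0:ℝ)..L, g y ^ 2) + c3 * L := by
      rw [intervalIntegral.integral_add (hi1.add hi2) intervalIntegrable_const,
        intervalIntegral.integral_add hi1 hi2,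
        intervalIntegral.integral_const_mul, intervalIntegral.integral_const_mul,
        intervalIntegral.integral_const]
      simp only [smul_eq_mul, sub_zero]
      ring
    rw [h2] at h1
    exact h1
  have hpapp : ∀ y, p y = dw y + b 0 * w y + G y := fun _ => rfl
  have hωtapp : ∀ y, ωt y = v y - F y := fun _ => rfl
  have hFapp : ∀ x, F x = ∫ y in x..L, b (y - x) * v y := fun _ => rfl
  clear_value v F G ωt dw p b B
  -- pointwise constants
  have hb0 : |b 0| ≤ M := hMb 0 (left_mem_Icc.mpr hL.le)
  have hMJ2 : (M * J) ^ 2 ≤ M ^ 2 * L * Iw2 := by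
    have h := mul_le_mul_of_nonneg_left hJ2 (sq_nonneg M)
    linarith only [h]
  -- upper bound pieces
  have hup1 : Iom2 ≤ 2 * Iw2 + 0 * Iw2 + (2 * (M * J) ^ 2) * L := by
    refine key_int ωt w w 2 0 (2 * (M * J) ^ 2) hωtc.continuousOn hw.continuousOn
      hw.continuousOn ?_
    intro y hy
    have h1 : |F y| ≤ M * J := hFb y hy
    have h3 : F y ^ 2 ≤ (M * J) ^ 2 := by
      rw [← sq_abs (F y)]
      exact pow_le_pow_left₀ (abs_nonneg _) h1 2
    have h2 : ωt y = w y - F y := by rw [hωtapp y, hvw y hy]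
    rw [h2]
    linarith only [sq_nonneg (w y + F y), h3]
  have hsq3 : ∀ u1 u2 u3 : ℝ, (u1 + u2 + u3) ^ 2 ≤ 3 * u1 ^ 2 + 3 * u2 ^ 2 + 3 * u3 ^ 2 := by
    intro u1 u2 u3
    linarith only [sq_nonneg (u1 - u2), sq_nonneg (u1 - u3), sq_nonneg (u2 - u3)]
  have hbw : ∀ y : ℝ, (b 0 * w y) ^ 2 ≤ M ^ 2 * w y ^ 2 := by
    intro y
    have h : b 0 ^ 2 ≤ M ^ 2 := by
      rw [← sq_abs (b 0)]
      exact pow_le_pow_left₀ (abs_nonneg _) hb0 2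
    rw [mul_pow]
    have h2 := mul_le_mul_of_nonneg_right h (sq_nonneg (w y))
    linarith only [h2]
  have hGsq : ∀ y ∈ Icc 0 L, G y ^ 2 ≤ (M * J) ^ 2 := by
    intro y hy
    rw [← sq_abs (G y)]
    exact pow_le_pow_left₀ (abs_nonneg _) (hGb y hy) 2
  have hup2 : Ip2 ≤ 3 * Idw2 + (3 * M ^ 2) * Iw2 + (3 * (M * J) ^ 2) * L := by
    refine key_int p dw w 3 (3 * M ^ 2) (3 * (M * J) ^ 2) hpc hdwc hw.continuousOn ?_
    intro y hy
    rw [hpapp y]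
    linarith only [hsq3 (dw y) (b 0 * w y) (G y), hbw y, hGsq y hy]
  have hUpper : Real.sqrt (Iom2 + Ip2) ≤ Real.sqrt K2 * Real.sqrt (Iw2 + Idw2) := by
    have hcomb2 : Iom2 + Ip2 ≤ K2 * (Iw2 + Idw2) := by
      rw [hK2def]
      have e1 : (M * J) ^ 2 * L ≤ M ^ 2 * L ^ 2 * Iw2 := by
        have h := mul_le_mul_of_nonneg_right hMJ2 hL.le
        linarith only [h]
      linarith only [hup1, hup2, e1, hIw2nn, hIdw2nn,
        mul_nonneg (sq_nonneg M) hIw2nn, mul_nonneg (sq_nonneg M) hIdw2nn,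
        mul_nonneg (mul_nonneg (sq_nonneg M) (sq_nonneg L)) hIw2nn,
        mul_nonneg (mul_nonneg (sq_nonneg M) (sq_nonneg L)) hIdw2nn]
    calc Real.sqrt (Iom2 + Ip2) ≤ Real.sqrt (K2 * (Iw2 + Idw2)) := Real.sqrt_le_sqrt hcomb2
      _ = Real.sqrt K2 * Real.sqrt (Iw2 + Idw2) := Real.sqrt_mul hK2.le _
  -- lower bound
  have hTnn : 0 ≤ Iom2 + Ip2 := by linarith
  set Sb : ℝ := CL * Real.sqrt (Iom2 + Ip2) with hSbdef
  have hSbnn : 0 ≤ Sb := mul_nonneg hCL.le (Real.sqrt_nonneg _)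
  have hsupω : ∀ x ∈ Icc 0 L, |ωt x| ≤ Sb := by
    intro x hx
    have h := sup_bound hL hωtc.continuousOn hpc hωt' hx
    rw [hSbdef, hCLdef]
    exact h
  have hptwv : ∀ x ∈ Icc 0 L, |v x| ≤ |ωt x| + M * ∫ y in x..L, |v y| := by
    intro x hx
    have h1 : v x = ωt x + F x := by rw [hωtapp x]; ring
    have h2 := hbound b hbc hMb x hx
    calc |v x| = |ωt x + F x| := by rw [← h1]
      _ ≤ |ωt x| + |F x| := abs_add_le _ _
      _ ≤ |ωt x| + M * ∫ y in x..L, |v y| := by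
          rw [← hFapp x] at h2
          linarith only [h2]
  have hgr := gronwall_aux hL hM hSbnn hvc hptwv hsupω
  have hIw2lb : Iw2 ≤ L * (E * Sb) ^ 2 := by
    have e1 : Iw2 = ∫ y in (0:ℝ)..L, v y ^ 2 := by
      rw [hIw2def]
      apply intervalIntegral.integral_congr
      intro y hy
      rw [huIcc] at hy
      show w y ^ 2 = v y ^ 2
      rw [hvw y hy]
    rw [e1]
    have hpt : ∀ y ∈ Icc 0 L, v y ^ 2 ≤ (E * Sb) ^ 2 := by
      intro y hy
      have h1 := hgr y hy
      rw [← hEdef] at h1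
      rw [← sq_abs (v y)]
      exact pow_le_pow_left₀ (abs_nonneg _) h1 2
    have h2 := intervalIntegral.integral_mono_on hL.le
      ((hvc.pow 2).intervalIntegrable (μ := volume) _ _) intervalIntegrable_const hpt
    rw [intervalIntegral.integral_const] at h2
    simpa [smul_eq_mul, sub_zero] using h2
  have hlow2 : Idw2 ≤ 3 * Ip2 + (3 * M ^ 2) * Iw2 + (3 * (M * J) ^ 2) * L := by
    refine key_int dw p w 3 (3 * M ^ 2) (3 * (M * J) ^ 2) hdwc hpc hw.continuousOn ?_
    intro y hy
    have h3 : dw y = p y - b 0 * w y - G y := by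
      have h4 := hpapp y
      linarith
    rw [h3]
    have h5 := hsq3 (p y) (-(b 0 * w y)) (-(G y))
    have h6 : (p y + -(b 0 * w y) + -(G y)) ^ 2 = (p y - b 0 * w y - G y) ^ 2 := by ring
    rw [h6] at h5
    have h7 : (-(b 0 * w y)) ^ 2 = (b 0 * w y) ^ 2 := by ring
    have h8 : (-(G y)) ^ 2 = G y ^ 2 := by ring
    rw [h7, h8] at h5
    linarith only [h5, hbw y, hGsq y hy]
  have hE2Sb : L * (E * Sb) ^ 2 = L * E ^ 2 * CL ^ 2 * (Iom2 + Ip2) := by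
    rw [hSbdef, mul_pow, mul_pow, Real.sq_sqrt hTnn]
    ring
  have hcomb1 : Iw2 + Idw2 ≤ K1 * (Iom2 + Ip2) := by
    rw [hK1def]
    have hIw2' : Iw2 ≤ L * E ^ 2 * CL ^ 2 * (Iom2 + Ip2) := by rw [← hE2Sb]; exact hIw2lb
    have hcoef : (0:ℝ) ≤ 1 + 3 * M ^ 2 + 3 * M ^ 2 * L ^ 2 := by positivity
    have hkey := mul_le_mul_of_nonneg_left hIw2' hcoef
    have e1 : (M * J) ^ 2 * L ≤ M ^ 2 * L ^ 2 * Iw2 := by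
      have h := mul_le_mul_of_nonneg_right hMJ2 hL.le
      linarith only [h]
    linarith only [hlow2, e1, hkey, hIom2nn, hIp2nn]
  constructor
  · rw [hH1w, hH1om]
    have h1 : Real.sqrt (Iw2 + Idw2) ≤ Real.sqrt K1 * Real.sqrt (Iom2 + Ip2) := by
      rw [← Real.sqrt_mul hK1.le]
      exact Real.sqrt_le_sqrt hcomb1
    calc 1 / Real.sqrt K1 * Real.sqrt (Iw2 + Idw2)
        ≤ 1 / Real.sqrt K1 * (Real.sqrt K1 * Real.sqrt (Iom2 + Ip2)) :=
          mul_le_mul_of_nonneg_left h1 (by positivity)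
      _ = Real.sqrt (Iom2 + Ip2) := by field_simp
  · rw [hH1w, hH1om]
    exact hUpper
end

section
/- Suppose L > 0, v* > 0, γp* > v*, μ* = v*/(γp* − v*), k₁ ∈ ℝ, and a ∈ C¹([0,L]). Let T > 0 and let w, z : [0,L] × [0,T] → ℝ be continuously differentiable with ∂ₜw = −v* ∂ₓw, ∂ₜz = (γp* − v*) ∂ₓz, and w(0,t) = k₁ z(0,t) + ∫₀ᴸ a(y) w(y,t) dy for all t. Define η(x,t) = k₁ z(x,t) + ∫_{μ*x}^{L} a(y) w(y − μ* x, t) dy when μ* x ≤ L, and η(x,t) = k₁ z(x,t) when μ* x > L. Then η(0,t) = w(0,t) for all t, and for every t ∈ (0,T) and every x ∈ (0,L) with x ≠ L/μ*, η satisfies ∂ₜη(x,t) = (γp* − v*) ∂ₓη(x,t) + ǎ(x) η(0,t), where ǎ(x) = v* a(μ* x) for μ* x ≤ L and ǎ(x) = 0 otherwise. -/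
open Set

open Function intervalIntegral MeasureTheory Topology Metric in
lemma slice_fst {w : ℝ → ℝ → ℝ} {L T u t : ℝ}
    (hw : ContDiffOn ℝ 1 (Function.uncurry w) (Icc 0 L ×ˢ Icc 0 T))
    (hu : u ∈ Ioo (0:ℝ) L) (ht : t ∈ Ioo (0:ℝ) T) :
    HasDerivAt (fun y => w y t)
      (fderivWithin ℝ (Function.uncurry w) (Icc 0 L ×ˢ Icc 0 T) (u, t) (1, 0)) u := by
  have hmem : (Icc (0:ℝ) L ×ˢ Icc (0:ℝ) T) ∈ 𝓝 (u, t) :=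
    prod_mem_nhds (Icc_mem_nhds hu.1 hu.2) (Icc_mem_nhds ht.1 ht.2)
  rw [fderivWithin_of_mem_nhds hmem]
  have hd : HasFDerivAt (Function.uncurry w) (fderiv ℝ (Function.uncurry w) (u, t)) (u, t) :=
    ((hw.contDiffAt hmem).differentiableAt one_ne_zero).hasFDerivAt
  have hg : HasDerivAt (fun y : ℝ => (y, t)) ((1:ℝ), (0:ℝ)) u :=
    (hasDerivAt_id u).prodMk (hasDerivAt_const u t)
  exact hd.comp_hasDerivAt u hg

open Function intervalIntegral MeasureTheory Topology Metric in
lemma slice_snd {w : ℝ → ℝ → ℝ} {L T u t : ℝ}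
    (hw : ContDiffOn ℝ 1 (Function.uncurry w) (Icc 0 L ×ˢ Icc 0 T))
    (hu : u ∈ Icc (0:ℝ) L) (ht : t ∈ Ioo (0:ℝ) T) :
    HasDerivAt (fun s => w u s)
      (fderivWithin ℝ (Function.uncurry w) (Icc 0 L ×ˢ Icc 0 T) (u, t) (0, 1)) t := by
  have hsub : (u, t) ∈ (Icc (0:ℝ) L ×ˢ Icc (0:ℝ) T) := ⟨hu, Ioo_subset_Icc_self ht⟩
  have hF := ((hw.differentiableOn one_ne_zero) _ hsub).hasFDerivWithinAt
  have hg : HasDerivWithinAt (fun s : ℝ => (u, s)) ((0:ℝ), (1:ℝ)) (Icc 0 T) t :=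
    ((hasDerivAt_const t u).prodMk (hasDerivAt_id t)).hasDerivWithinAt
  have hmaps : MapsTo (fun s : ℝ => (u, s)) (Icc 0 T) (Icc (0:ℝ) L ×ˢ Icc (0:ℝ) T) :=
    fun s hs => ⟨hu, hs⟩
  exact (hF.comp_hasDerivWithinAt t hg hmaps).hasDerivAt (Icc_mem_nhds ht.1 ht.2)
/-- The piecewise decoupling transformation applied to time-dependent states:
`η(x,t) = k₁ z(x,t) + ∫_{μ*x}^L a(y) w(y − μ*x, t) dy` when `μ* x ≤ L`,
and `η(x,t) = k₁ z(x,t)` otherwise. -/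
noncomputable def etaTrans (L μs k₁ : ℝ) (a : ℝ → ℝ) (z w : ℝ → ℝ → ℝ) :
    ℝ → ℝ → ℝ :=
  fun x t =>
    if μs * x ≤ L then k₁ * z x t + ∫ y in (μs * x)..L, a y * w (y - μs * x) t
    else k₁ * z x t

set_option maxHeartbeats 1600000 in
open Function intervalIntegral MeasureTheory Topology Metric Interval in
/-- for the decoupled cascade `∂ₜw = −v*∂ₓw`,
`∂ₜz = (γp* − v*)∂ₓz` with routing boundary coupling
`w(0,t) = k₁ z(0,t) + ∫₀ᴸ a(y)w(y,t)dy`, the piecewise transformation `η`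
satisfies `η(0,t) = w(0,t)` and, away from `x = L/μ*`,
`∂ₜη = (γp* − v*) ∂ₓη + ǎ(x) η(0,t)` where `ǎ(x) = v* a(μ* x)` for
`μ* x ≤ L` and `ǎ(x) = 0` otherwise; `μ* = v*/(γp* − v*)`. -/
theorem stmt13 (L vs gp k₁ T : ℝ) (hL : 0 < L) (hvs : 0 < vs) (hgp : vs < gp)
    (hT : 0 < T) (a : ℝ → ℝ) (ha : ContDiffOn ℝ 1 a (Icc 0 L))
    (w z : ℝ → ℝ → ℝ)
    (hw : ContDiffOn ℝ 1 (Function.uncurry w) (Icc 0 L ×ˢ Icc 0 T))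
    (hz : ContDiffOn ℝ 1 (Function.uncurry z) (Icc 0 L ×ˢ Icc 0 T))
    (hwpde : ∀ x ∈ Ioo (0:ℝ) L, ∀ t ∈ Ioo (0:ℝ) T,
      deriv (fun s => w x s) t = -vs * deriv (fun y => w y t) x)
    (hzpde : ∀ x ∈ Ioo (0:ℝ) L, ∀ t ∈ Ioo (0:ℝ) T,
      deriv (fun s => z x s) t = (gp - vs) * deriv (fun y => z y t) x)
    (hbc : ∀ t ∈ Icc (0:ℝ) T,
      w 0 t = k₁ * z 0 t + ∫ y in (0:ℝ)..L, a y * w y t) :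
    (∀ t ∈ Icc (0:ℝ) T,
      etaTrans L (vs / (gp - vs)) k₁ a z w 0 t = w 0 t) ∧
    ∀ t ∈ Ioo (0:ℝ) T, ∀ x ∈ Ioo (0:ℝ) L,
      x ≠ L / (vs / (gp - vs)) →
      deriv (fun s => etaTrans L (vs / (gp - vs)) k₁ a z w x s) t
        = (gp - vs) * deriv (fun y => etaTrans L (vs / (gp - vs)) k₁ a z w y t) x
          + (if (vs / (gp - vs)) * x ≤ L then vs * a ((vs / (gp - vs)) * x) else 0)
            * etaTrans L (vs / (gp - vs)) k₁ a z w 0 t := by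
  have hc : (0:ℝ) < gp - vs := sub_pos.2 hgp
  set μs := vs / (gp - vs) with hμs
  have hμpos : 0 < μs := div_pos hvs hc
  have hcμ : (gp - vs) * μs = vs := by
    rw [hμs]; field_simp
  have hSud : UniqueDiffOn ℝ (Icc (0:ℝ) L ×ˢ Icc (0:ℝ) T) :=
    (uniqueDiffOn_Icc hL).prod (uniqueDiffOn_Icc hT)
  have hWc : ContinuousOn
      (fun p => fderivWithin ℝ (Function.uncurry w) (Icc (0:ℝ) L ×ˢ Icc (0:ℝ) T) p)
      (Icc (0:ℝ) L ×ˢ Icc (0:ℝ) T) := hw.continuousOn_fderivWithin hSud le_rfl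
  have hAc : ContinuousOn (fun y => derivWithin a (Icc (0:ℝ) L) y) (Icc (0:ℝ) L) :=
    ha.continuousOn_derivWithin (uniqueDiffOn_Icc hL) le_rfl
  have part1 : ∀ t ∈ Icc (0:ℝ) T, etaTrans L μs k₁ a z w 0 t = w 0 t := by
    intro t ht
    simp only [etaTrans, mul_zero, sub_zero, if_pos hL.le]
    exact (hbc t ht).symm
  refine ⟨part1, ?_⟩
  intro t ht x hx hxne
  have hμxne : μs * x ≠ L := by
    intro h
    apply hxne
    rw [eq_div_iff hμpos.ne']
    linarith [mul_comm μs x, h]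
  rcases lt_or_gt_of_ne hμxne with hlt | hgt
  · -- hard case : μs * x < L
    have hℓ : 0 < L - μs * x := sub_pos.2 hlt
    have hμx : 0 < μs * x := mul_pos hμpos hx.1
    have htI : t ∈ Icc (0:ℝ) T := Ioo_subset_Icc_self ht
    have hsubΙ : Ι (0:ℝ) 1 ⊆ Icc (0:ℝ) 1 := by
      rw [uIoc_of_le zero_le_one]; exact Ioc_subset_Icc_self
    have hIcc : uIcc (0:ℝ) 1 = Icc (0:ℝ) 1 := uIcc_of_le zero_le_one
    have hII : ∀ {f : ℝ → ℝ}, ContinuousOn f (Icc (0:ℝ) 1) →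
        IntervalIntegrable f volume 0 1 := by
      intro f hf
      exact ContinuousOn.intervalIntegrable (by rw [hIcc]; exact hf)
    have hAESM : ∀ {f : ℝ → ℝ}, ContinuousOn f (Icc (0:ℝ) 1) →
        AEStronglyMeasurable f (volume.restrict (Ι (0:ℝ) 1)) := fun hf =>
      (hf.mono hsubΙ).aestronglyMeasurable measurableSet_uIoc
    -- point membership
    have hpt1 : ∀ s ∈ Icc (0:ℝ) 1, (L - μs*x)*s + μs*x ∈ Icc (0:ℝ) L := by
      intro s hs
      constructor <;> nlinarith [hs.1, hs.2]
    have hpt2 : ∀ s ∈ Icc (0:ℝ) 1, (L - μs*x)*s ∈ Icc (0:ℝ) L := by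
      intro s hs
      constructor <;> nlinarith [hs.1, hs.2]
    -- generic continuity of the substituted integrand
    have hgc : ∀ x' t', 0 ≤ μs*x' → μs*x' ≤ L → t' ∈ Icc (0:ℝ) T →
        ContinuousOn (fun s => a ((L - μs*x')*s + μs*x') * w ((L - μs*x')*s) t')
          (Icc (0:ℝ) 1) := by
      intro x' t' h0 h1 ht'
      have haux1 : ∀ s ∈ Icc (0:ℝ) 1, (L - μs*x')*s + μs*x' ∈ Icc (0:ℝ) L := by
        intro s hs; constructor <;> nlinarith [hs.1, hs.2]
      have haux2 : ∀ s ∈ Icc (0:ℝ) 1, (L - μs*x')*s ∈ Icc (0:ℝ) L := by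
        intro s hs; constructor <;> nlinarith [hs.1, hs.2]
      apply ContinuousOn.mul
      · exact ha.continuousOn.comp (Continuous.continuousOn (by fun_prop)) haux1
      · exact hw.continuousOn.comp (f := fun s : ℝ => ((L - μs*x')*s, t'))
          (Continuous.continuousOn (by fun_prop)) (fun s hs => ⟨haux2 s hs, ht'⟩)
    -- particular continuity facts at (x, t)
    have hca_s : ContinuousOn (fun s => a ((L - μs*x)*s + μs*x)) (Icc (0:ℝ) 1) :=
      ha.continuousOn.comp (Continuous.continuousOn (by fun_prop)) hpt1
    have hcA_s : ContinuousOn (fun s => derivWithin a (Icc (0:ℝ) L) ((L - μs*x)*s + μs*x))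
        (Icc (0:ℝ) 1) :=
      hAc.comp (Continuous.continuousOn (by fun_prop)) hpt1
    have hcw_s : ContinuousOn (fun s => w ((L - μs*x)*s) t) (Icc (0:ℝ) 1) :=
      hw.continuousOn.comp (f := fun s : ℝ => ((L - μs*x)*s, t))
        (Continuous.continuousOn (by fun_prop)) (fun s hs => ⟨hpt2 s hs, htI⟩)
    have hcW1_s : ContinuousOn (fun s => fderivWithin ℝ (Function.uncurry w)
        (Icc (0:ℝ) L ×ˢ Icc (0:ℝ) T) ((L - μs*x)*s, t) ((1:ℝ), (0:ℝ))) (Icc (0:ℝ) 1) :=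
      (hWc.comp (f := fun s : ℝ => ((L - μs*x)*s, t)) (Continuous.continuousOn (by fun_prop))
        (fun s hs => ⟨hpt2 s hs, htI⟩)).clm_apply continuousOn_const
    have hcW2_s : ContinuousOn (fun s => fderivWithin ℝ (Function.uncurry w)
        (Icc (0:ℝ) L ×ˢ Icc (0:ℝ) T) ((L - μs*x)*s, t) ((0:ℝ), (1:ℝ))) (Icc (0:ℝ) 1) :=
      (hWc.comp (f := fun s : ℝ => ((L - μs*x)*s, t)) (Continuous.continuousOn (by fun_prop))
        (fun s hs => ⟨hpt2 s hs, htI⟩)).clm_apply continuousOn_const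
    -- bounds
    obtain ⟨Ca, hCa⟩ := isCompact_Icc.exists_bound_of_continuousOn ha.continuousOn
    obtain ⟨CA, hCA⟩ := isCompact_Icc.exists_bound_of_continuousOn hAc
    obtain ⟨Cw, hCw⟩ := (isCompact_Icc.prod isCompact_Icc).exists_bound_of_continuousOn
      hw.continuousOn
    obtain ⟨CW, hCW⟩ := (isCompact_Icc.prod isCompact_Icc).exists_bound_of_continuousOn hWc
    have hCa0 : 0 ≤ Ca := (norm_nonneg _).trans (hCa 0 ⟨le_rfl, hL.le⟩)
    have hCA0 : 0 ≤ CA := (norm_nonneg _).trans (hCA 0 ⟨le_rfl, hL.le⟩)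
    have hCw0 : 0 ≤ Cw := (norm_nonneg _).trans
      (hCw (0, 0) ⟨⟨le_rfl, hL.le⟩, ⟨le_rfl, hT.le⟩⟩)
    have hCW0 : 0 ≤ CW := (norm_nonneg _).trans
      (hCW (0, 0) ⟨⟨le_rfl, hL.le⟩, ⟨le_rfl, hT.le⟩⟩)
    have habs : ∀ {u v C D : ℝ}, |u| ≤ C → |v| ≤ D → |u * v| ≤ C * D := by
      intro u v C D h1 h2
      rw [abs_mul]
      exact mul_le_mul h1 h2 (abs_nonneg _) (le_trans (abs_nonneg _) h1)
    -- change of variables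
    have hcov : ∀ x' t', 0 ≤ μs * x' → μs * x' < L →
        (∫ y in (μs*x')..L, a y * w (y - μs*x') t') =
          (L - μs*x') * ∫ s in (0:ℝ)..1, a ((L - μs*x')*s + μs*x') * w ((L - μs*x')*s) t' := by
      intro x' t' h0 h1
      have hne : (L - μs*x') ≠ 0 := ne_of_gt (by linarith)
      have h := intervalIntegral.integral_comp_mul_add (a := (0:ℝ)) (b := 1)
        (f := fun y => a y * w (y - μs*x') t') hne (μs*x')
      rw [mul_zero, zero_add, mul_one, smul_eq_mul,
        show L - μs * x' + μs * x' = L from by ring] at h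
      simp only [add_sub_cancel_right] at h
      rw [h, ← mul_assoc, mul_inv_cancel₀ hne, one_mul]
    -- PDE in fderivWithin form
    have hwrel : ∀ u ∈ Ioo (0:ℝ) L,
        fderivWithin ℝ (Function.uncurry w) (Icc (0:ℝ) L ×ˢ Icc (0:ℝ) T) (u, t) ((0:ℝ), (1:ℝ))
          = -vs * fderivWithin ℝ (Function.uncurry w) (Icc (0:ℝ) L ×ˢ Icc (0:ℝ) T) (u, t)
              ((1:ℝ), (0:ℝ)) := by
      intro u hu
      rw [← (slice_snd hw (Ioo_subset_Icc_self hu) ht).deriv, ← (slice_fst hw hu ht).deriv]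
      exact hwpde u hu t ht
    have hzrel : fderivWithin ℝ (Function.uncurry z) (Icc (0:ℝ) L ×ˢ Icc (0:ℝ) T) (x, t)
          ((0:ℝ), (1:ℝ))
        = (gp - vs) * fderivWithin ℝ (Function.uncurry z) (Icc (0:ℝ) L ×ˢ Icc (0:ℝ) T) (x, t)
            ((1:ℝ), (0:ℝ)) := by
      rw [← (slice_snd hz (Ioo_subset_Icc_self hx) ht).deriv, ← (slice_fst hz hx ht).deriv]
      exact hzpde x hx t ht
    -- derivative in t of the parametric integral
    have hε : 0 < min t (T - t) := lt_min ht.1 (sub_pos.2 ht.2)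
    have hball_t : ∀ t' ∈ Metric.ball t (min t (T - t)), t' ∈ Ioo (0:ℝ) T := by
      intro t' ht'
      rw [Metric.mem_ball, Real.dist_eq, abs_lt] at ht'
      constructor
      · linarith [min_le_left t (T - t), ht'.1]
      · linarith [min_le_right t (T - t), ht'.2]
    have hmeasT : ∀ᶠ t' in 𝓝 t, AEStronglyMeasurable
        (fun s => a ((L - μs*x)*s + μs*x) * w ((L - μs*x)*s) t')
        (volume.restrict (Ι (0:ℝ) 1)) := by
      filter_upwards [Ioo_mem_nhds ht.1 ht.2] with t' ht'
      exact hAESM (hgc x t' hμx.le hlt.le (Ioo_subset_Icc_self ht'))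
    have hboundT : ∀ᵐ s ∂(volume : Measure ℝ), s ∈ Ι (0:ℝ) 1 →
        ∀ t' ∈ Metric.ball t (min t (T - t)),
          ‖a ((L - μs*x)*s + μs*x) * fderivWithin ℝ (Function.uncurry w)
            (Icc (0:ℝ) L ×ˢ Icc (0:ℝ) T) ((L - μs*x)*s, t') ((0:ℝ), (1:ℝ))‖
            ≤ Ca * (CW * 1) := by
      refine MeasureTheory.ae_of_all _ ?_
      intro s hs t' ht'
      have hsI : s ∈ Icc (0:ℝ) 1 := hsubΙ hs
      have hmem : ((L - μs*x)*s, t') ∈ Icc (0:ℝ) L ×ˢ Icc (0:ℝ) T :=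
        ⟨hpt2 s hsI, Ioo_subset_Icc_self (hball_t t' ht')⟩
      have h2 : ‖fderivWithin ℝ (Function.uncurry w) (Icc (0:ℝ) L ×ˢ Icc (0:ℝ) T)
          ((L - μs*x)*s, t') ((0:ℝ), (1:ℝ))‖ ≤ CW * 1 := by
        have hle := (fderivWithin ℝ (Function.uncurry w) (Icc (0:ℝ) L ×ˢ Icc (0:ℝ) T)
          ((L - μs*x)*s, t')).le_opNorm ((0:ℝ), (1:ℝ))
        have hnorm : ‖((0:ℝ), (1:ℝ))‖ = 1 := by
          simp [Prod.norm_def]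
        rw [hnorm] at hle
        exact hle.trans (mul_le_mul_of_nonneg_right (hCW _ hmem) zero_le_one)
      rw [norm_mul]
      exact mul_le_mul (hCa _ (hpt1 s hsI)) h2 (norm_nonneg _) hCa0
    have hdiffT : ∀ᵐ s ∂(volume : Measure ℝ), s ∈ Ι (0:ℝ) 1 →
        ∀ t' ∈ Metric.ball t (min t (T - t)),
          HasDerivAt (fun t'' => a ((L - μs*x)*s + μs*x) * w ((L - μs*x)*s) t'')
            (a ((L - μs*x)*s + μs*x) * fderivWithin ℝ (Function.uncurry w)
              (Icc (0:ℝ) L ×ˢ Icc (0:ℝ) T) ((L - μs*x)*s, t') ((0:ℝ), (1:ℝ))) t' := by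
      refine MeasureTheory.ae_of_all _ ?_
      intro s hs t' ht'
      have hsIoc : s ∈ Ioc (0:ℝ) 1 := by rwa [uIoc_of_le zero_le_one] at hs
      have hm : (L - μs*x)*s ∈ Ioo (0:ℝ) L := ⟨mul_pos hℓ hsIoc.1, by nlinarith [hsIoc.2]⟩
      exact (slice_snd hw (Ioo_subset_Icc_self hm) (hball_t t' ht')).const_mul _
    have hΦt : HasDerivAt
        (fun t' => ∫ s in (0:ℝ)..1, a ((L - μs*x)*s + μs*x) * w ((L - μs*x)*s) t')
        (∫ s in (0:ℝ)..1, a ((L - μs*x)*s + μs*x) * fderivWithin ℝ (Function.uncurry w)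
          (Icc (0:ℝ) L ×ˢ Icc (0:ℝ) T) ((L - μs*x)*s, t) ((0:ℝ), (1:ℝ))) t :=
      (intervalIntegral.hasDerivAt_integral_of_dominated_loc_of_deriv_le
        (F := fun t' s => a ((L - μs*x)*s + μs*x) * w ((L - μs*x)*s) t')
        (F' := fun t' s => a ((L - μs*x)*s + μs*x) * fderivWithin ℝ (Function.uncurry w)
          (Icc (0:ℝ) L ×ˢ Icc (0:ℝ) T) ((L - μs*x)*s, t') ((0:ℝ), (1:ℝ)))
        (bound := fun _ => Ca * (CW * 1))
        (Metric.ball_mem_nhds t hε) hmeasT (hII (hgc x t hμx.le hlt.le htI)) (hAESM (hca_s.mul hcW2_s))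
        hboundT intervalIntegrable_const hdiffT).2
    -- derivative in x of the parametric integral
    have hxLμ : x < L / μs := by
      rw [lt_div_iff₀ hμpos]
      linarith [mul_comm μs x]
    have hδ : 0 < min x (L / μs - x) := lt_min hx.1 (sub_pos.2 hxLμ)
    have hballx : ∀ x' ∈ Metric.ball x (min x (L / μs - x)), 0 < x' ∧ μs * x' < L := by
      intro x' hx'
      rw [Metric.mem_ball, Real.dist_eq, abs_lt] at hx'
      constructor
      · linarith [min_le_left x (L / μs - x), hx'.1]
      · have h2 : x' < L / μs := by linarith [min_le_right x (L / μs - x), hx'.2]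
        have h3 := (lt_div_iff₀ hμpos).1 h2
        linarith [mul_comm μs x']
    have hmeasX : ∀ᶠ x' in 𝓝 x, AEStronglyMeasurable
        (fun s => a ((L - μs*x')*s + μs*x') * w ((L - μs*x')*s) t)
        (volume.restrict (Ι (0:ℝ) 1)) := by
      filter_upwards [Metric.ball_mem_nhds x hδ] with x' hx'
      obtain ⟨h0, h1⟩ := hballx x' hx'
      exact hAESM (hgc x' t (mul_pos hμpos h0).le h1.le htI)
    have hboundX : ∀ᵐ s ∂(volume : Measure ℝ), s ∈ Ι (0:ℝ) 1 →
        ∀ x' ∈ Metric.ball x (min x (L / μs - x)),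
          ‖μs * ((1 - s) * (derivWithin a (Icc (0:ℝ) L) ((L - μs*x')*s + μs*x')
              * w ((L - μs*x')*s) t))
            - μs * (s * (a ((L - μs*x')*s + μs*x') * fderivWithin ℝ (Function.uncurry w)
              (Icc (0:ℝ) L ×ˢ Icc (0:ℝ) T) ((L - μs*x')*s, t) ((1:ℝ), (0:ℝ))))‖
            ≤ μs * (1 * (CA * Cw)) + μs * (1 * (Ca * (CW * 1))) := by
      refine MeasureTheory.ae_of_all _ ?_
      intro s hs x' hx'
      obtain ⟨h0, h1⟩ := hballx x' hx'
      have hsIoc : s ∈ Ioc (0:ℝ) 1 := by rwa [uIoc_of_le zero_le_one] at hs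
      have hμx' : 0 < μs * x' := mul_pos hμpos h0
      have hm1 : (L - μs*x')*s + μs*x' ∈ Icc (0:ℝ) L := by
        constructor <;> nlinarith [hsIoc.1, hsIoc.2]
      have hm2 : (L - μs*x')*s ∈ Icc (0:ℝ) L := by
        constructor <;> nlinarith [hsIoc.1, hsIoc.2]
      have hm2' : ((L - μs*x')*s, t) ∈ Icc (0:ℝ) L ×ˢ Icc (0:ℝ) T := ⟨hm2, htI⟩
      have e1 : |derivWithin a (Icc (0:ℝ) L) ((L - μs*x')*s + μs*x')| ≤ CA := hCA _ hm1
      have e2 : |w ((L - μs*x')*s) t| ≤ Cw := by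
        have := hCw ((L - μs*x')*s, t) hm2'
        simpa [Function.uncurry, Real.norm_eq_abs] using this
      have e3 : |a ((L - μs*x')*s + μs*x')| ≤ Ca := hCa _ hm1
      have e4 : |fderivWithin ℝ (Function.uncurry w) (Icc (0:ℝ) L ×ˢ Icc (0:ℝ) T)
          ((L - μs*x')*s, t) ((1:ℝ), (0:ℝ))| ≤ CW * 1 := by
        have hle := (fderivWithin ℝ (Function.uncurry w) (Icc (0:ℝ) L ×ˢ Icc (0:ℝ) T)
          ((L - μs*x')*s, t)).le_opNorm ((1:ℝ), (0:ℝ))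
        have hnorm : ‖((1:ℝ), (0:ℝ))‖ = 1 := by simp [Prod.norm_def]
        rw [hnorm] at hle
        rw [← Real.norm_eq_abs]
        exact hle.trans (mul_le_mul_of_nonneg_right (hCW _ hm2') zero_le_one)
      have h1s : |1 - s| ≤ 1 := by
        rw [abs_of_nonneg (by linarith [hsIoc.2])]
        linarith [hsIoc.1]
      have hss : |s| ≤ 1 := by
        rw [abs_of_nonneg hsIoc.1.le]; exact hsIoc.2
      have hμabs : |μs| ≤ μs := le_of_eq (abs_of_pos hμpos)
      refine le_trans (norm_sub_le _ _) ?_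
      rw [Real.norm_eq_abs, Real.norm_eq_abs]
      exact add_le_add (habs hμabs (habs h1s (habs e1 e2)))
        (habs hμabs (habs hss (habs e3 e4)))
    have hdiffX : ∀ᵐ s ∂(volume : Measure ℝ), s ∈ Ι (0:ℝ) 1 →
        ∀ x' ∈ Metric.ball x (min x (L / μs - x)),
          HasDerivAt (fun x'' => a ((L - μs*x'')*s + μs*x'') * w ((L - μs*x'')*s) t)
            (μs * ((1 - s) * (derivWithin a (Icc (0:ℝ) L) ((L - μs*x')*s + μs*x')
                * w ((L - μs*x')*s) t))
              - μs * (s * (a ((L - μs*x')*s + μs*x') * fderivWithin ℝ (Function.uncurry w)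
                (Icc (0:ℝ) L ×ˢ Icc (0:ℝ) T) ((L - μs*x')*s, t) ((1:ℝ), (0:ℝ))))) x' := by
      refine MeasureTheory.ae_of_all _ ?_
      intro s hs x' hx'
      obtain ⟨h0, h1⟩ := hballx x' hx'
      have hsIoc : s ∈ Ioc (0:ℝ) 1 := by rwa [uIoc_of_le zero_le_one] at hs
      have hμx' : 0 < μs * x' := mul_pos hμpos h0
      have hℓ' : 0 < L - μs * x' := sub_pos.2 h1
      by_cases hs1 : s = 1
      · subst hs1
        have heq : (fun x'' => a ((L - μs*x'')*1 + μs*x'') * w ((L - μs*x'')*1) t)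
            = fun x'' => a L * w ((L - μs*x'')*1) t := by
          funext x''
          rw [show (L - μs*x'')*1 + μs*x'' = L from by ring]
        rw [heq]
        have hin : HasDerivAt (fun x'' : ℝ => (L - μs*x'')*1) (-μs) x' := by
          have := ((hasDerivAt_const x' L).sub ((hasDerivAt_id x').const_mul μs)).mul_const
            (1:ℝ)
          refine this.congr_deriv ?_
          ring
        have hm : (L - μs*x')*1 ∈ Ioo (0:ℝ) L := by
          constructor <;> nlinarith
        have hwpt := slice_fst hw hm ht
        have hres := (hwpt.comp x' hin).const_mul (a L)
        refine hres.congr_deriv ?_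
        rw [show (L - μs*x')*1 + μs*x' = L from by ring]
        ring
      · have hslt : s < 1 := lt_of_le_of_ne hsIoc.2 hs1
        have h1d : HasDerivAt (fun x'' => (L - μs*x'')*s + μs*x'') (μs*(1-s)) x' := by
          have := (((hasDerivAt_const x' L).sub ((hasDerivAt_id x').const_mul μs)).mul_const
            s).add ((hasDerivAt_id x').const_mul μs)
          refine this.congr_deriv ?_
          ring
        have h2d : HasDerivAt (fun x'' => (L - μs*x'')*s) (-(μs*s)) x' := by
          have := ((hasDerivAt_const x' L).sub ((hasDerivAt_id x').const_mul μs)).mul_const s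
          refine this.congr_deriv ?_
          ring
        have hp1pos : (0:ℝ) < (L - μs*x')*s + μs*x' := by nlinarith [hsIoc.1]
        have hp1lt : (L - μs*x')*s + μs*x' < L := by nlinarith
        have hnb : Icc (0:ℝ) L ∈ 𝓝 ((L - μs*x')*s + μs*x') := Icc_mem_nhds hp1pos hp1lt
        have hapt : HasDerivAt a (derivWithin a (Icc (0:ℝ) L) ((L - μs*x')*s + μs*x'))
            ((L - μs*x')*s + μs*x') := by
          rw [derivWithin_of_mem_nhds hnb]
          exact ((ha.contDiffAt hnb).differentiableAt one_ne_zero).hasDerivAt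
        have hm2 : (L - μs*x')*s ∈ Ioo (0:ℝ) L := by
          constructor
          · exact mul_pos hℓ' hsIoc.1
          · nlinarith
        have hwpt := slice_fst hw hm2 ht
        have hres := (hapt.comp x' h1d).mul (hwpt.comp x' h2d)
        refine hres.congr_deriv ?_
        simp only [Function.comp_apply, Pi.mul_apply]
        ring
    have hΦx : HasDerivAt
        (fun x' => ∫ s in (0:ℝ)..1, a ((L - μs*x')*s + μs*x') * w ((L - μs*x')*s) t)
        (∫ s in (0:ℝ)..1,
          (μs * ((1 - s) * (derivWithin a (Icc (0:ℝ) L) ((L - μs*x)*s + μs*x)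
              * w ((L - μs*x)*s) t))
            - μs * (s * (a ((L - μs*x)*s + μs*x) * fderivWithin ℝ (Function.uncurry w)
              (Icc (0:ℝ) L ×ˢ Icc (0:ℝ) T) ((L - μs*x)*s, t) ((1:ℝ), (0:ℝ)))))) x :=
      (intervalIntegral.hasDerivAt_integral_of_dominated_loc_of_deriv_le
        (F := fun x' s => a ((L - μs*x')*s + μs*x') * w ((L - μs*x')*s) t)
        (F' := fun x' s => μs * ((1 - s) * (derivWithin a (Icc (0:ℝ) L)
              ((L - μs*x')*s + μs*x') * w ((L - μs*x')*s) t))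
            - μs * (s * (a ((L - μs*x')*s + μs*x') * fderivWithin ℝ (Function.uncurry w)
              (Icc (0:ℝ) L ×ˢ Icc (0:ℝ) T) ((L - μs*x')*s, t) ((1:ℝ), (0:ℝ)))))
        (bound := fun _ => μs * (1 * (CA * Cw)) + μs * (1 * (Ca * (CW * 1))))
        (Metric.ball_mem_nhds x hδ) hmeasX (hII (hgc x t hμx.le hlt.le htI))
        (hAESM (((continuousOn_const.mul ((continuousOn_const.sub continuousOn_id).mul
          (hcA_s.mul hcw_s)))).sub (continuousOn_const.mul (continuousOn_id.mul
          (hca_s.mul hcW1_s)))))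
        hboundX intervalIntegrable_const hdiffX).2
    -- Fundamental theorem of calculus for s ↦ (1-s)·(a·w)
    have iP : IntervalIntegrable
        (fun s => a ((L - μs*x)*s + μs*x) * w ((L - μs*x)*s) t) volume 0 1 :=
      hII (hca_s.mul hcw_s)
    have iNeg : IntervalIntegrable
        (fun s => -(a ((L - μs*x)*s + μs*x) * w ((L - μs*x)*s) t)) volume 0 1 :=
      hII ((hca_s.mul hcw_s).neg)
    have iQ : IntervalIntegrable (fun s => (1 - s) * (derivWithin a (Icc (0:ℝ) L)
        ((L - μs*x)*s + μs*x) * w ((L - μs*x)*s) t)) volume 0 1 :=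
      hII ((continuousOn_const.sub continuousOn_id).mul (hcA_s.mul hcw_s))
    have iR : IntervalIntegrable (fun s => (1 - s) * (a ((L - μs*x)*s + μs*x)
        * fderivWithin ℝ (Function.uncurry w) (Icc (0:ℝ) L ×ˢ Icc (0:ℝ) T)
          ((L - μs*x)*s, t) ((1:ℝ), (0:ℝ)))) volume 0 1 :=
      hII ((continuousOn_const.sub continuousOn_id).mul (hca_s.mul hcW1_s))
    have iJ : IntervalIntegrable (fun s => a ((L - μs*x)*s + μs*x)
        * fderivWithin ℝ (Function.uncurry w) (Icc (0:ℝ) L ×ˢ Icc (0:ℝ) T)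
          ((L - μs*x)*s, t) ((1:ℝ), (0:ℝ))) volume 0 1 :=
      hII (hca_s.mul hcW1_s)
    have iK : IntervalIntegrable (fun s => s * (a ((L - μs*x)*s + μs*x)
        * fderivWithin ℝ (Function.uncurry w) (Icc (0:ℝ) L ×ˢ Icc (0:ℝ) T)
          ((L - μs*x)*s, t) ((1:ℝ), (0:ℝ)))) volume 0 1 :=
      hII (continuousOn_id.mul (hca_s.mul hcW1_s))
    have iBQ : IntervalIntegrable (fun s => (L - μs*x) * ((1 - s) * (derivWithin a
        (Icc (0:ℝ) L) ((L - μs*x)*s + μs*x) * w ((L - μs*x)*s) t))) volume 0 1 :=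
      hII (continuousOn_const.mul ((continuousOn_const.sub continuousOn_id).mul
        (hcA_s.mul hcw_s)))
    have iBR : IntervalIntegrable (fun s => (L - μs*x) * ((1 - s) * (a ((L - μs*x)*s + μs*x)
        * fderivWithin ℝ (Function.uncurry w) (Icc (0:ℝ) L ×ˢ Icc (0:ℝ) T)
          ((L - μs*x)*s, t) ((1:ℝ), (0:ℝ))))) volume 0 1 :=
      hII (continuousOn_const.mul ((continuousOn_const.sub continuousOn_id).mul
        (hca_s.mul hcW1_s)))
    have iμQ : IntervalIntegrable (fun s => μs * ((1 - s) * (derivWithin a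
        (Icc (0:ℝ) L) ((L - μs*x)*s + μs*x) * w ((L - μs*x)*s) t))) volume 0 1 :=
      hII (continuousOn_const.mul ((continuousOn_const.sub continuousOn_id).mul
        (hcA_s.mul hcw_s)))
    have iμK : IntervalIntegrable (fun s => μs * (s * (a ((L - μs*x)*s + μs*x)
        * fderivWithin ℝ (Function.uncurry w) (Icc (0:ℝ) L ×ˢ Icc (0:ℝ) T)
          ((L - μs*x)*s, t) ((1:ℝ), (0:ℝ))))) volume 0 1 :=
      hII (continuousOn_const.mul (continuousOn_id.mul (hca_s.mul hcW1_s)))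
    have iSum : IntervalIntegrable (fun s => (L - μs*x) * ((1 - s) * (derivWithin a
        (Icc (0:ℝ) L) ((L - μs*x)*s + μs*x) * w ((L - μs*x)*s) t))
          + (L - μs*x) * ((1 - s) * (a ((L - μs*x)*s + μs*x)
        * fderivWithin ℝ (Function.uncurry w) (Icc (0:ℝ) L ×ˢ Icc (0:ℝ) T)
          ((L - μs*x)*s, t) ((1:ℝ), (0:ℝ))))) volume 0 1 := iBQ.add iBR
    have hfc : ContinuousOn
        (fun s => (1 - s) * (a ((L - μs*x)*s + μs*x) * w ((L - μs*x)*s) t)) (Icc (0:ℝ) 1) :=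
      (continuousOn_const.sub continuousOn_id).mul (hca_s.mul hcw_s)
    have hf'c : ContinuousOn (fun s =>
        -(a ((L - μs*x)*s + μs*x) * w ((L - μs*x)*s) t)
          + ((L - μs*x) * ((1 - s) * (derivWithin a (Icc (0:ℝ) L) ((L - μs*x)*s + μs*x)
              * w ((L - μs*x)*s) t))
            + (L - μs*x) * ((1 - s) * (a ((L - μs*x)*s + μs*x) * fderivWithin ℝ
              (Function.uncurry w) (Icc (0:ℝ) L ×ˢ Icc (0:ℝ) T) ((L - μs*x)*s, t)
                ((1:ℝ), (0:ℝ)))))) (Icc (0:ℝ) 1) :=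
      ((hca_s.mul hcw_s).neg).add
        ((continuousOn_const.mul ((continuousOn_const.sub continuousOn_id).mul
          (hcA_s.mul hcw_s))).add
          (continuousOn_const.mul ((continuousOn_const.sub continuousOn_id).mul
            (hca_s.mul hcW1_s))))
    have hfd : ∀ s ∈ Ioo (0:ℝ) 1, HasDerivWithinAt
        (fun s => (1 - s) * (a ((L - μs*x)*s + μs*x) * w ((L - μs*x)*s) t))
        (-(a ((L - μs*x)*s + μs*x) * w ((L - μs*x)*s) t)
          + ((L - μs*x) * ((1 - s) * (derivWithin a (Icc (0:ℝ) L) ((L - μs*x)*s + μs*x)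
              * w ((L - μs*x)*s) t))
            + (L - μs*x) * ((1 - s) * (a ((L - μs*x)*s + μs*x) * fderivWithin ℝ
              (Function.uncurry w) (Icc (0:ℝ) L ×ˢ Icc (0:ℝ) T) ((L - μs*x)*s, t)
                ((1:ℝ), (0:ℝ)))))) (Ioi s) s := by
      intro s hs
      apply HasDerivAt.hasDerivWithinAt
      have h1d : HasDerivAt (fun σ => (L - μs*x)*σ + μs*x) (L - μs*x) s := by
        have := (((hasDerivAt_id s).const_mul (L - μs*x))).add_const (μs*x)
        refine this.congr_deriv ?_
        ring
      have h2d : HasDerivAt (fun σ => (L - μs*x)*σ) (L - μs*x) s := by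
        have := (hasDerivAt_id s).const_mul (L - μs*x)
        refine this.congr_deriv ?_
        ring
      have hp1pos : (0:ℝ) < (L - μs*x)*s + μs*x := by nlinarith [hs.1]
      have hp1lt : (L - μs*x)*s + μs*x < L := by nlinarith [hs.2]
      have hnb : Icc (0:ℝ) L ∈ 𝓝 ((L - μs*x)*s + μs*x) := Icc_mem_nhds hp1pos hp1lt
      have hapt : HasDerivAt a (derivWithin a (Icc (0:ℝ) L) ((L - μs*x)*s + μs*x))
          ((L - μs*x)*s + μs*x) := by
        rw [derivWithin_of_mem_nhds hnb]
        exact ((ha.contDiffAt hnb).differentiableAt one_ne_zero).hasDerivAt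
      have hm2 : (L - μs*x)*s ∈ Ioo (0:ℝ) L := ⟨mul_pos hℓ hs.1, by nlinarith [hs.2]⟩
      have hwpt := slice_fst hw hm2 ht
      have hone : HasDerivAt (fun σ : ℝ => 1 - σ) (-1) s := by
        have := (hasDerivAt_const s (1:ℝ)).sub (hasDerivAt_id s)
        refine this.congr_deriv ?_
        ring
      have hres := hone.mul ((hapt.comp s h1d).mul (hwpt.comp s h2d))
      refine hres.congr_deriv ?_
      simp only [Function.comp_apply, Pi.mul_apply]
      ring
    have hftc := intervalIntegral.integral_eq_sub_of_hasDeriv_right_of_le zero_le_one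
      hfc hfd (hII hf'c)
    have hsplit : (∫ s in (0:ℝ)..1,
        (-(a ((L - μs*x)*s + μs*x) * w ((L - μs*x)*s) t)
          + ((L - μs*x) * ((1 - s) * (derivWithin a (Icc (0:ℝ) L) ((L - μs*x)*s + μs*x)
              * w ((L - μs*x)*s) t))
            + (L - μs*x) * ((1 - s) * (a ((L - μs*x)*s + μs*x) * fderivWithin ℝ
              (Function.uncurry w) (Icc (0:ℝ) L ×ˢ Icc (0:ℝ) T) ((L - μs*x)*s, t)
                ((1:ℝ), (0:ℝ)))))))
        = -(∫ s in (0:ℝ)..1, a ((L - μs*x)*s + μs*x) * w ((L - μs*x)*s) t)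
          + ((L - μs*x) * (∫ s in (0:ℝ)..1, (1 - s) * (derivWithin a (Icc (0:ℝ) L)
              ((L - μs*x)*s + μs*x) * w ((L - μs*x)*s) t))
            + (L - μs*x) * (∫ s in (0:ℝ)..1, (1 - s) * (a ((L - μs*x)*s + μs*x)
              * fderivWithin ℝ (Function.uncurry w) (Icc (0:ℝ) L ×ˢ Icc (0:ℝ) T)
                ((L - μs*x)*s, t) ((1:ℝ), (0:ℝ))))) := by
      rw [intervalIntegral.integral_add iNeg iSum,
        intervalIntegral.integral_add iBQ iBR,
        intervalIntegral.integral_neg, intervalIntegral.integral_const_mul,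
        intervalIntegral.integral_const_mul]
    rw [hsplit] at hftc
    have hval : ((fun s => (1 - s) * (a ((L - μs*x)*s + μs*x) * w ((L - μs*x)*s) t)) 1
          - (fun s => (1 - s) * (a ((L - μs*x)*s + μs*x) * w ((L - μs*x)*s) t)) 0)
        = -(a (μs*x) * w 0 t) := by
      norm_num
    rw [hval] at hftc
    -- PDE under the integral
    have hIW : (∫ s in (0:ℝ)..1, a ((L - μs*x)*s + μs*x) * fderivWithin ℝ
          (Function.uncurry w) (Icc (0:ℝ) L ×ˢ Icc (0:ℝ) T) ((L - μs*x)*s, t)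
            ((0:ℝ), (1:ℝ)))
        = -vs * ∫ s in (0:ℝ)..1, a ((L - μs*x)*s + μs*x) * fderivWithin ℝ
          (Function.uncurry w) (Icc (0:ℝ) L ×ˢ Icc (0:ℝ) T) ((L - μs*x)*s, t)
            ((1:ℝ), (0:ℝ)) := by
      rw [← intervalIntegral.integral_const_mul]
      apply intervalIntegral.integral_congr_ae
      refine MeasureTheory.ae_of_all _ ?_
      intro s hs
      have hsIoc : s ∈ Ioc (0:ℝ) 1 := by rwa [uIoc_of_le zero_le_one] at hs
      have hm : (L - μs*x)*s ∈ Ioo (0:ℝ) L := ⟨mul_pos hℓ hsIoc.1, by nlinarith [hsIoc.2]⟩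
      rw [hwrel _ hm]
      ring
    -- split the x-derivative integral
    have hDX : (∫ s in (0:ℝ)..1,
        (μs * ((1 - s) * (derivWithin a (Icc (0:ℝ) L) ((L - μs*x)*s + μs*x)
            * w ((L - μs*x)*s) t))
          - μs * (s * (a ((L - μs*x)*s + μs*x) * fderivWithin ℝ (Function.uncurry w)
            (Icc (0:ℝ) L ×ˢ Icc (0:ℝ) T) ((L - μs*x)*s, t) ((1:ℝ), (0:ℝ))))))
        = μs * (∫ s in (0:ℝ)..1, (1 - s) * (derivWithin a (Icc (0:ℝ) L)
            ((L - μs*x)*s + μs*x) * w ((L - μs*x)*s) t))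
          - μs * (∫ s in (0:ℝ)..1, s * (a ((L - μs*x)*s + μs*x) * fderivWithin ℝ
            (Function.uncurry w) (Icc (0:ℝ) L ×ˢ Icc (0:ℝ) T) ((L - μs*x)*s, t)
              ((1:ℝ), (0:ℝ)))) := by
      rw [intervalIntegral.integral_sub iμQ iμK,
        intervalIntegral.integral_const_mul, intervalIntegral.integral_const_mul]
    have hK : (∫ s in (0:ℝ)..1, s * (a ((L - μs*x)*s + μs*x) * fderivWithin ℝ
          (Function.uncurry w) (Icc (0:ℝ) L ×ˢ Icc (0:ℝ) T) ((L - μs*x)*s, t)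
            ((1:ℝ), (0:ℝ))))
        = (∫ s in (0:ℝ)..1, a ((L - μs*x)*s + μs*x) * fderivWithin ℝ
            (Function.uncurry w) (Icc (0:ℝ) L ×ˢ Icc (0:ℝ) T) ((L - μs*x)*s, t)
              ((1:ℝ), (0:ℝ)))
          - (∫ s in (0:ℝ)..1, (1 - s) * (a ((L - μs*x)*s + μs*x) * fderivWithin ℝ
            (Function.uncurry w) (Icc (0:ℝ) L ×ˢ Icc (0:ℝ) T) ((L - μs*x)*s, t)
              ((1:ℝ), (0:ℝ)))) := by
      rw [← intervalIntegral.integral_sub iJ iR]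
      apply intervalIntegral.integral_congr
      intro s hs
      ring
    -- assemble the derivatives of η
    have hfunt : (fun t' => etaTrans L μs k₁ a z w x t')
        = fun t' => k₁ * z x t' + (L - μs*x) * ∫ s in (0:ℝ)..1,
            a ((L - μs*x)*s + μs*x) * w ((L - μs*x)*s) t' := by
      funext t'
      simp only [etaTrans, if_pos hlt.le]
      rw [hcov x t' hμx.le hlt]
    have hz1 := slice_fst hz hx ht
    have hz2 := slice_snd hz (Ioo_subset_Icc_self hx) ht
    have hDt : HasDerivAt (fun t' => etaTrans L μs k₁ a z w x t')
        (k₁ * fderivWithin ℝ (Function.uncurry z) (Icc (0:ℝ) L ×ˢ Icc (0:ℝ) T) (x, t)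
            ((0:ℝ), (1:ℝ))
          + (L - μs*x) * ∫ s in (0:ℝ)..1, a ((L - μs*x)*s + μs*x) * fderivWithin ℝ
            (Function.uncurry w) (Icc (0:ℝ) L ×ˢ Icc (0:ℝ) T) ((L - μs*x)*s, t)
              ((0:ℝ), (1:ℝ))) t := by
      rw [hfunt]
      exact (hz2.const_mul k₁).add (hΦt.const_mul (L - μs*x))
    have hprodx : HasDerivAt (fun x' => (L - μs*x') * ∫ s in (0:ℝ)..1,
          a ((L - μs*x')*s + μs*x') * w ((L - μs*x')*s) t)
        ((0 - μs*1) * (∫ s in (0:ℝ)..1, a ((L - μs*x)*s + μs*x) * w ((L - μs*x)*s) t)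
          + (L - μs*x) * ∫ s in (0:ℝ)..1,
            (μs * ((1 - s) * (derivWithin a (Icc (0:ℝ) L) ((L - μs*x)*s + μs*x)
                * w ((L - μs*x)*s) t))
              - μs * (s * (a ((L - μs*x)*s + μs*x) * fderivWithin ℝ (Function.uncurry w)
                (Icc (0:ℝ) L ×ˢ Icc (0:ℝ) T) ((L - μs*x)*s, t) ((1:ℝ), (0:ℝ)))))) x :=
      ((hasDerivAt_const x L).sub ((hasDerivAt_id x).const_mul μs)).mul hΦx
    have hDx := (hz1.const_mul k₁).add hprodx
    simp only [Pi.add_def] at hDx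
    have hevx : (fun x' => etaTrans L μs k₁ a z w x' t) =ᶠ[𝓝 x]
        fun x' => k₁ * z x' t + (L - μs*x') * ∫ s in (0:ℝ)..1,
          a ((L - μs*x')*s + μs*x') * w ((L - μs*x')*s) t := by
      filter_upwards [Metric.ball_mem_nhds x hδ] with x' hx'
      obtain ⟨h0, h1⟩ := hballx x' hx'
      simp only [etaTrans, if_pos h1.le]
      rw [hcov x' t (mul_pos hμpos h0).le h1]
    rw [hDt.deriv, hevx.deriv_eq, hDx.deriv, if_pos hlt.le, part1 t htI, hzrel, hIW, hDX, hK]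
    linear_combination
      ((∫ s in (0:ℝ)..1, a ((L - μs*x)*s + μs*x) * w ((L - μs*x)*s) t)
        - (L - μs*x) * (∫ s in (0:ℝ)..1, (1 - s) * (derivWithin a (Icc (0:ℝ) L)
            ((L - μs*x)*s + μs*x) * w ((L - μs*x)*s) t))
        + (L - μs*x) * ((∫ s in (0:ℝ)..1, a ((L - μs*x)*s + μs*x) * fderivWithin ℝ
            (Function.uncurry w) (Icc (0:ℝ) L ×ˢ Icc (0:ℝ) T) ((L - μs*x)*s, t)
              ((1:ℝ), (0:ℝ)))
          - (∫ s in (0:ℝ)..1, (1 - s) * (a ((L - μs*x)*s + μs*x) * fderivWithin ℝ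
            (Function.uncurry w) (Icc (0:ℝ) L ×ˢ Icc (0:ℝ) T) ((L - μs*x)*s, t)
              ((1:ℝ), (0:ℝ)))))) * hcμ
      - vs * hftc
  · -- easy case : μs * x > L
    have hev : (fun y => etaTrans L μs k₁ a z w y t) =ᶠ[𝓝 x] fun y => k₁ * z y t := by
      have hop : IsOpen {y : ℝ | L < μs * y} :=
        isOpen_lt continuous_const (continuous_const.mul continuous_id)
      filter_upwards [hop.mem_nhds hgt] with y hy
      simp only [etaTrans, if_neg (not_le.mpr hy)]
    have hfun : (fun s => etaTrans L μs k₁ a z w x s) = fun s => k₁ * z x s := by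
      funext s; simp only [etaTrans, if_neg (not_le.mpr hgt)]
    rw [hfun, hev.deriv_eq, deriv_const_mul_field, deriv_const_mul_field,
      if_neg (not_le.mpr hgt), hzpde x hx t ht]
    ring
end
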